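/- arXiv:1503.01032 — 2 statements merged into one kernel-verified Lean document; each statement's English description precedes it below -/
import Mathlib

section
/- Let ψ be a periodic automorphism of V_{n,r} in semi-normal form with respect to an A-basis X, and let Z be an expansion of X with respect to which ψ is also in semi-normal form. Then the cycle types coincide, T_ψ(X) = T_ψ(Z), and for every d, the multiplicities satisfy m_ψ(d, X) ≡ m_ψ(d, Z) (mod n−1). -/
/-- A Higman `Ω`-algebra in the variety `𝒱_n`: `n` descending (unary) operations
`α₁, …, α_n` and one `n`-ary contraction `λ`, satisfying the laws
`(wα₁, …, wα_n)λ = w` and `(w₁⋯w_nλ)α_i = w_i`. -/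
class HigmanAlgebra (n : ℕ) (V : Type) where
  desc : V → Fin n → V
  contr : (Fin n → V) → V
  contr_desc : ∀ w : V, contr (desc w) = w
  desc_contr : ∀ (f : Fin n → V) (i : Fin n), desc (contr f) i = f i

open HigmanAlgebra

/-- A homomorphism of Higman algebras: a map compatible with the descending
operations and the contraction. -/
def IsHom (n : ℕ) {V W : Type} [HigmanAlgebra n V] [HigmanAlgebra n W] (f : V → W) : Prop :=
  (∀ (v : V) (i : Fin n), f (desc v i) = desc (f v) i) ∧
  (∀ g : Fin n → V, f (contr g) = contr (f ∘ g))

/-- `X` is a basis (free generating set) of `V`: every map from `X` into a Higman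
algebra extends uniquely to a homomorphism. -/
def IsBasis (n : ℕ) {V : Type} [HigmanAlgebra n V] (X : Set V) : Prop :=
  ∀ (W : Type) [HigmanAlgebra n W], ∀ f : X → W,
    ∃! h : V → W, IsHom n h ∧ ∀ x : X, h x = f x

/-- The action of a word `Γ ∈ A*` in the descending operations: `v Γ`. -/
def applyWord {n : ℕ} {V : Type} [HigmanAlgebra n V] (v : V) (Γ : List (Fin n)) : V :=
  Γ.foldl (fun u i => desc u i) v

/-- A simple expansion of `Y` replaces some `y ∈ Y` by `yα₁, …, yα_n`. -/
def SimpleExpansion (n : ℕ) {V : Type} [HigmanAlgebra n V] (Y Z : Set V) : Prop :=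
  ∃ y ∈ Y, Z = (Y \ {y}) ∪ Set.range (fun i : Fin n => desc y i)

/-- An expansion of `Y`: the result of finitely many simple expansions. -/
def Expansion (n : ℕ) {V : Type} [HigmanAlgebra n V] : Set V → Set V → Prop :=
  Relation.ReflTransGen (SimpleExpansion n)

/-- `X⟨A⟩ = { xΓ : x ∈ X, Γ ∈ A* }`. -/
def wordClosure (n : ℕ) {V : Type} [HigmanAlgebra n V] (X : Set V) : Set V :=
  {v | ∃ x ∈ X, ∃ Γ : List (Fin n), v = applyWord x Γ}

/-- `ψ` is in semi-normal form with respect to `X`: no element of `X⟨A⟩` lies in an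
incomplete finite `X`-component of a `ψ`-orbit, i.e. there is no `y ∈ X⟨A⟩` whose
`X`-component is bounded in both directions. -/
def SemiNormal (n : ℕ) {V : Type} [HigmanAlgebra n V] (ψ : Equiv.Perm V) (X : Set V) : Prop :=
  ∀ y ∈ wordClosure n X, ¬ ∃ a b : ℤ, a ≤ 0 ∧ 0 ≤ b ∧
      (∀ i : ℤ, a ≤ i → i ≤ b → (ψ ^ i) y ∈ wordClosure n X) ∧
      (ψ ^ (a - 1)) y ∉ wordClosure n X ∧ (ψ ^ (b + 1)) y ∉ wordClosure n X

/-- `(m, Γ)` is the characteristic of `u` with respect to `ψ`: `u ψ^m = u Γ` with `Γ`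
nonempty, and `u ψ^i ∉ u⟨A⟩` for all `i` with `0 < |i| < |m|`. -/
def IsCharacteristic (n : ℕ) {V : Type} [HigmanAlgebra n V] (ψ : Equiv.Perm V)
    (u : V) (m : ℤ) (Γ : List (Fin n)) : Prop :=
  m ≠ 0 ∧ Γ ≠ [] ∧ (ψ ^ m) u = applyWord u Γ ∧
    ∀ i : ℤ, i ≠ 0 → |i| < |m| → ∀ Δ : List (Fin n), (ψ ^ i) u ≠ applyWord u Δ

/-- The `ψ`-orbit of `x` has size exactly `d`: `d` is the minimal positive period. -/
def OrbitSize {V : Type} (ψ : Equiv.Perm V) (x : V) (d : ℕ) : Prop :=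
  0 < d ∧ (ψ ^ d) x = x ∧ ∀ e : ℕ, 0 < e → e < d → (ψ ^ e) x ≠ x

/-- The cycle type `T_ψ(X)`: the set of sizes of `ψ`-orbits of elements of `X`. -/
def CycType {V : Type} (ψ : Equiv.Perm V) (X : Set V) : Set ℕ :=
  {d : ℕ | ∃ x ∈ X, OrbitSize ψ x d}

/-- The multiplicity `m_ψ(d, X) = D / d`, where `D` is the number of elements of `X`
whose `ψ`-orbit has size `d`. -/
noncomputable def Mult {V : Type} (ψ : Equiv.Perm V) (X : Set V) (d : ℕ) : ℕ :=
  ({x ∈ X | OrbitSize ψ x d}).ncard / d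

/-- `ψ` is periodic: every element has finite `ψ`-orbit. -/
def Periodic {V : Type} (ψ : Equiv.Perm V) : Prop :=
  ∀ v : V, ∃ p : ℕ, 0 < p ∧ (ψ ^ p) v = v



namespace Stmt13Aux

open HigmanAlgebra

variable {n : ℕ} {V : Type} [HigmanAlgebra n V]

lemma applyWord_nil (v : V) : applyWord v ([] : List (Fin n)) = v := rfl

lemma applyWord_cons (v : V) (i : Fin n) (Γ : List (Fin n)) :
    applyWord v (i :: Γ) = applyWord (desc v i) Γ := rfl

lemma applyWord_append (v : V) (Γ Δ : List (Fin n)) :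
    applyWord v (Γ ++ Δ) = applyWord (applyWord v Γ) Δ := by
  simp [applyWord, List.foldl_append]

lemma applyWord_singleton (v : V) (i : Fin n) :
    applyWord v [i] = desc v i := rfl

lemma hom_applyWord {W : Type} [HigmanAlgebra n W] {f : V → W} (hf : IsHom n f)
    (v : V) (Γ : List (Fin n)) : f (applyWord v Γ) = applyWord (f v) Γ := by
  induction Γ generalizing v with
  | nil => rfl
  | cons i Γ ih => rw [applyWord_cons, ih, hf.1, applyWord_cons]

/-- The concrete model: functions from streams to `S × streams`. -/
def Mod (n : ℕ) (S : Type) : Type := (ℕ → Fin n) → S × (ℕ → Fin n)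

/-- cons on streams -/
def scons {n : ℕ} (i : Fin n) (σ : ℕ → Fin n) : ℕ → Fin n :=
  fun k => match k with
  | 0 => i
  | (k+1) => σ k

instance ModAlg (n : ℕ) (S : Type) : HigmanAlgebra n (Mod n S) where
  desc φ i := fun σ => φ (scons i σ)
  contr f := fun σ => f (σ 0) (fun k => σ (k+1))
  contr_desc φ := by
    funext σ
    show φ (scons (σ 0) (fun k => σ (k+1))) = φ σ
    congr 1
    funext k
    cases k <;> rfl
  desc_contr f i := by
    funext σ
    rfl

lemma Mod_applyWord {S : Type} (Γ : List (Fin n)) (φ : Mod n S) :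
    applyWord φ Γ = fun σ => φ (Γ.foldr scons σ) := by
  induction Γ generalizing φ with
  | nil => rfl
  | cons i Γ ih =>
      rw [applyWord_cons, ih]
      rfl

lemma foldr_scons_inj (hn : 2 ≤ n) (Γ Γ' : List (Fin n))
    (h : ∀ σ : ℕ → Fin n, Γ.foldr scons σ = Γ'.foldr scons σ) : Γ = Γ' := by
  induction Γ generalizing Γ' with
  | nil =>
      cases Γ' with
      | nil => rfl
      | cons b Δ =>
          exfalso
          have : Nontrivial (Fin n) := Fin.nontrivial_iff_two_le.mpr hn
          rcases exists_ne b with ⟨c, hc⟩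
          have := congrFun (h (fun _ => c)) 0
          simp [List.foldr, scons] at this
          exact hc this
  | cons a Γ ih =>
      cases Γ' with
      | nil =>
          exfalso
          have : Nontrivial (Fin n) := Fin.nontrivial_iff_two_le.mpr hn
          rcases exists_ne a with ⟨c, hc⟩
          have := congrFun (h (fun _ => c)) 0
          simp [List.foldr, scons] at this
          exact hc this.symm
      | cons b Δ =>
          have h0 : a = b := by
            have := congrFun (h (fun _ => a)) 0
            simpa [List.foldr, scons] using this
          subst h0
          have htail : ∀ σ : ℕ → Fin n, Γ.foldr scons σ = Δ.foldr scons σ := by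
            intro σ
            funext k
            have := congrFun (h σ) (k+1)
            simpa [List.foldr, scons] using this
          rw [ih Δ htail]

/-- embedding of generators into the model -/
def emb {n : ℕ} {S : Type} (s : S) : Mod n S := fun σ => (s, σ)

lemma Mod_applyWord_emb {S : Type} (s : S) (Γ : List (Fin n)) (σ : ℕ → Fin n) :
    applyWord (emb s : Mod n S) Γ σ = (s, Γ.foldr scons σ) := by
  rw [Mod_applyWord]
  rfl

/-- The decoding map is injective, via the concrete model. -/
lemma decode_inj (hn : 2 ≤ n) {X₀ : Set V} (hX₀ : IsBasis n X₀)
    (x x' : X₀) (Γ Γ' : List (Fin n))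
    (h : applyWord (x : V) Γ = applyWord (x' : V) Γ') : x = x' ∧ Γ = Γ' := by
  obtain ⟨g, ⟨ghom, gx⟩, -⟩ := hX₀ (Mod n X₀) (fun x => emb x)
  have e1 : g (applyWord (x : V) Γ) = applyWord (g (x : V)) Γ := hom_applyWord ghom _ _
  have e2 : g (applyWord (x' : V) Γ') = applyWord (g (x' : V)) Γ' := hom_applyWord ghom _ _
  rw [h] at e1
  rw [gx x] at e1
  rw [gx x'] at e2
  have e3 : ∀ σ, applyWord (emb x : Mod n X₀) Γ σ = applyWord (emb x' : Mod n X₀) Γ' σ := by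
    intro σ
    rw [← e1, ← e2]
  have e4 : ∀ σ, ((x : X₀), Γ.foldr scons σ) = ((x' : X₀), Γ'.foldr scons σ) := by
    intro σ
    rw [← Mod_applyWord_emb, ← Mod_applyWord_emb]
    exact e3 σ
  have hx : x = x' := congrArg Prod.fst (e4 (fun _ => ⟨0, by omega⟩))
  refine ⟨hx, foldr_scons_inj hn _ _ ?_⟩
  intro σ
  exact congrArg Prod.snd (e4 σ)

/-- decoding -/
def decode {n : ℕ} {V : Type} [HigmanAlgebra n V] (X₀ : Set V) (p : X₀ × List (Fin n)) : V :=
  applyWord (p.1 : V) p.2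

lemma decode_inj' (hn : 2 ≤ n) {X₀ : Set V} (hX₀ : IsBasis n X₀)
    {p q : X₀ × List (Fin n)} (h : decode X₀ p = decode X₀ q) : p = q := by
  obtain ⟨h1, h2⟩ := decode_inj hn hX₀ p.1 q.1 p.2 q.2 h
  exact Prod.ext h1 h2

/-- Every expansion of the basis is the injective decoded image of a finite
antichain code set. -/
lemma code_exists (hn : 2 ≤ n) {X₀ : Set V} (hX₀ : IsBasis n X₀) (hX₀fin : X₀.Finite)
    {Y : Set V} (hY : Expansion n X₀ Y) :
    ∃ C : Set (X₀ × List (Fin n)), C.Finite ∧ Y = decode X₀ '' C ∧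
      ∀ p ∈ C, ∀ q ∈ C, p.1 = q.1 → p.2 <+: q.2 → p = q := by
  induction hY with
  | refl =>
      refine ⟨Set.range (fun x : X₀ => (x, ([] : List (Fin n)))), ?_, ?_, ?_⟩
      · have : Finite X₀ := hX₀fin.to_subtype
        exact Set.finite_range _
      · rw [← Set.range_comp]
        have : (decode X₀ ∘ fun x : X₀ => (x, ([] : List (Fin n)))) = fun x : X₀ => (x : V) := rfl
        rw [this, Subtype.range_coe]
      · rintro p ⟨xp, rfl⟩ q ⟨xq, rfl⟩ h1 h2
        simp only at h1 ⊢
        exact Prod.ext h1 rfl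
  | tail hYmid hstep ih =>
      rename_i Ymid Y' 
      obtain ⟨C, hCfin, hCim, hCanti⟩ := ih
      obtain ⟨y, hyY, hY'⟩ := hstep
      have hy' : y ∈ decode X₀ '' C := hCim ▸ hyY
      obtain ⟨p₀, hp₀C, hp₀⟩ := hy'
      refine ⟨(C \ {p₀}) ∪ Set.range (fun i : Fin n => (p₀.1, p₀.2 ++ [i])), ?_, ?_, ?_⟩
      · exact (hCfin.diff).union (Set.finite_range _)
      · rw [hY', Set.image_union]
        congr 1
        · -- Ymid \ {y} = decode '' (C \ {p₀})
          ext v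
          constructor
          · rintro ⟨hvY, hvne⟩
            rw [hCim] at hvY
            obtain ⟨q, hqC, rfl⟩ := hvY
            refine ⟨q, ⟨hqC, ?_⟩, rfl⟩
            simp only [Set.mem_singleton_iff] at hvne ⊢
            intro hq
            exact hvne (by rw [hq, hp₀])
          · rintro ⟨q, ⟨hqC, hqne⟩, rfl⟩
            refine ⟨hCim ▸ ⟨q, hqC, rfl⟩, ?_⟩
            simp only [Set.mem_singleton_iff]
            intro hv
            exact hqne (by rw [← hp₀] at hv; exact decode_inj' hn hX₀ hv)
        · -- range (desc y) = decode '' range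
          have hdec : ∀ i : Fin n, decode X₀ ((p₀.1, p₀.2 ++ [i]) : X₀ × List (Fin n)) = desc y i := by
            intro i
            show applyWord (p₀.1 : V) (p₀.2 ++ [i]) = desc y i
            rw [applyWord_append, ← hp₀]
            rfl
          ext v
          constructor
          · rintro ⟨i, rfl⟩
            exact ⟨(p₀.1, p₀.2 ++ [i]), ⟨i, rfl⟩, hdec i⟩
          · rintro ⟨q, ⟨i, hi⟩, rfl⟩
            exact ⟨i, by rw [← hi, hdec i]⟩
      · -- antichain
        rintro p (⟨hpC, hpne⟩ | ⟨i, rfl⟩) q (⟨hqC, hqne⟩ | ⟨j, rfl⟩) h1 h2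
        · exact hCanti p hpC q hqC h1 h2
        · -- p old, q = (p₀.1, p₀.2 ++ [j])
          exfalso
          simp only at h1 h2
          -- p.2 <+: p₀.2 ++ [j]
          rcases le_or_gt p.2.length p₀.2.length with hle | hlt
          · have : p.2 <+: p₀.2 :=
              List.prefix_of_prefix_length_le h2 (p₀.2.prefix_append [j]) (by simpa using hle)
            exact hpne (hCanti p hpC p₀ hp₀C h1 this)
          · have hlen : p.2.length = (p₀.2 ++ [j]).length := by
              have := h2.length_le
              simp at this ⊢
              omega
            have hpe : p.2 = p₀.2 ++ [j] := h2.eq_of_length hlen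
            have : p₀.2 <+: p.2 := by rw [hpe]; exact p₀.2.prefix_append [j]
            have := hCanti p₀ hp₀C p hpC h1.symm this
            rw [← this] at hpe
            simp at hpe
        · -- p new, q old
          exfalso
          simp only at h1 h2
          have : p₀.2 <+: q.2 := ((p₀.2.prefix_append [i]).trans h2)
          have heq := hCanti p₀ hp₀C q hqC h1 this
          rw [← heq] at h2
          have := h2.length_le
          simp at this
        · -- both new
          simp only at h1 h2 ⊢
          have hlen : (p₀.2 ++ [i]).length = (p₀.2 ++ [j]).length := by simp
          have := h2.eq_of_length hlen
          simp at this
          rw [this]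

lemma expansion_finite (hn : 2 ≤ n) {X₀ : Set V} (hX₀ : IsBasis n X₀) (hX₀fin : X₀.Finite)
    {Y : Set V} (hY : Expansion n X₀ Y) : Y.Finite := by
  obtain ⟨C, hCfin, rfl, -⟩ := code_exists hn hX₀ hX₀fin hY
  exact hCfin.image _

/-- Unique factorization over an expansion of the basis. -/
lemma root_uniq (hn : 2 ≤ n) {X₀ : Set V} (hX₀ : IsBasis n X₀) (hX₀fin : X₀.Finite)
    {Y : Set V} (hY : Expansion n X₀ Y) :
    ∀ y ∈ Y, ∀ y' ∈ Y, ∀ Γ Γ' : List (Fin n),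
      applyWord y Γ = applyWord y' Γ' → y = y' ∧ Γ = Γ' := by
  obtain ⟨C, hCfin, rfl, hanti⟩ := code_exists hn hX₀ hX₀fin hY
  rintro y ⟨p, hpC, rfl⟩ y' ⟨q, hqC, rfl⟩ Γ Γ' h
  have h' : decode X₀ ((p.1, p.2 ++ Γ) : X₀ × List (Fin n))
      = decode X₀ ((q.1, q.2 ++ Γ') : X₀ × List (Fin n)) := by
    show applyWord (p.1 : V) (p.2 ++ Γ) = applyWord (q.1 : V) (q.2 ++ Γ')
    rw [applyWord_append, applyWord_append]
    exact h
  obtain ⟨h1, h2⟩ := decode_inj hn hX₀ _ _ _ _ h'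
  have hpq : p = q := by
    rcases le_total p.2.length q.2.length with hle | hle
    · refine hanti p hpC q hqC h1 ?_
      exact List.prefix_of_prefix_length_le
        (by exact ⟨Γ, h2⟩) (q.2.prefix_append Γ') hle
    · refine (hanti q hqC p hpC h1.symm ?_).symm
      exact List.prefix_of_prefix_length_le
        (by exact ⟨Γ', h2.symm⟩) (p.2.prefix_append Γ) hle
  subst hpq
  refine ⟨rfl, ?_⟩
  rwa [List.append_cancel_left_eq] at h2

lemma mem_wordClosure_self {Y : Set V} {y : V} (hy : y ∈ Y) : y ∈ wordClosure n Y :=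
  ⟨y, hy, [], rfl⟩

/-- For a periodic permutation in semi-normal form, the word closure is invariant
under all integer powers. -/
lemma sn_orbit {ψ : Equiv.Perm V} (hper : Periodic ψ) {Y : Set V}
    (hsnf : SemiNormal n ψ Y) {y : V} (hy : y ∈ wordClosure n Y) (i : ℤ) :
    (ψ ^ i) y ∈ wordClosure n Y := by
  by_contra hbad
  obtain ⟨p, hp, hpy⟩ := hper y
  have key : ∀ (j m : ℤ), (ψ ^ (j + (p : ℤ) * m)) y = (ψ ^ j) y := by
    intro j m
    rw [zpow_add, Equiv.Perm.mul_apply]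
    congr 1
    have : ψ ^ ((p : ℤ) * m) = (ψ ^ p) ^ m := by
      rw [zpow_mul, zpow_natCast]
    rw [this]
    exact (Function.IsFixedPt.perm_zpow hpy m)
  have hp1 : (1 : ℤ) ≤ (p : ℤ) := by exact_mod_cast hp
  have habs : (|i| + 1) ≤ (p : ℤ) * (|i| + 1) :=
    le_mul_of_one_le_left (by positivity) hp1
  have hPpos : ∃ m : ℕ, 0 < m ∧ (ψ ^ ((m : ℕ) : ℤ)) y ∉ wordClosure n Y := by
    refine ⟨(i + (p : ℤ) * (|i| + 1)).toNat, ?_, ?_⟩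
    · have : (0 : ℤ) < i + (p : ℤ) * (|i| + 1) := by
        have h1 := neg_abs_le i
        linarith
      omega
    · have hpos : (0 : ℤ) < i + (p : ℤ) * (|i| + 1) := by
        have h1 := neg_abs_le i
        linarith
      rw [Int.toNat_of_nonneg hpos.le, key i (|i| + 1)]
      exact hbad
  have hPneg : ∃ m : ℕ, 0 < m ∧ (ψ ^ (-((m : ℕ) : ℤ))) y ∉ wordClosure n Y := by
    refine ⟨(-(i - (p : ℤ) * (|i| + 1))).toNat, ?_, ?_⟩
    · have : i - (p : ℤ) * (|i| + 1) < 0 := by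
        have h1 := le_abs_self i
        linarith
      omega
    · have hneg : i - (p : ℤ) * (|i| + 1) < 0 := by
        have h1 := le_abs_self i
        linarith
      have h2 : (0:ℤ) ≤ -(i - (p : ℤ) * (|i| + 1)) := by linarith
      rw [Int.toNat_of_nonneg h2]
      have h3 : -(-(i - (p : ℤ) * (|i| + 1))) = i + (p:ℤ) * (-(|i| + 1)) := by ring
      rw [h3, key i (-(|i| + 1))]
      exact hbad
  classical
  set b₁ := Nat.find hPpos with hb₁def
  set a₁ := Nat.find hPneg with ha₁def
  have hb₁ := Nat.find_spec hPpos
  have ha₁ := Nat.find_spec hPneg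
  refine hsnf y hy ⟨1 - (a₁ : ℤ), (b₁ : ℤ) - 1, ?_, ?_, ?_, ?_, ?_⟩
  · have := ha₁.1; omega
  · have := hb₁.1; omega
  · intro k hk1 hk2
    rcases le_or_gt 0 k with hk | hk
    · rcases Nat.eq_zero_or_pos k.toNat with h0 | h0
      · have : k = 0 := by omega
        rw [this, zpow_zero]
        simpa using hy
      · have hlt : k.toNat < b₁ := by omega
        have := Nat.find_min hPpos hlt
        push_neg at this
        have h2 := this h0
        rwa [Int.toNat_of_nonneg hk] at h2
    · have h0 : 0 < (-k).toNat := by omega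
      have hlt : (-k).toNat < a₁ := by omega
      have := Nat.find_min hPneg hlt
      push_neg at this
      have h2 := this h0
      have h3 : -(((-k).toNat : ℤ)) = k := by omega
      rwa [h3] at h2
  · have h3 : 1 - (a₁ : ℤ) - 1 = -(a₁ : ℤ) := by ring
    rw [h3]
    exact ha₁.2
  · have h3 : (b₁ : ℤ) - 1 + 1 = (b₁ : ℤ) := by ring
    rw [h3]
    exact hb₁.2

/-- A periodic permutation in semi-normal form w.r.t. an expanded basis maps the
basis into itself. -/
lemma perm_maps (hn : 2 ≤ n) {X₀ : Set V} (hX₀ : IsBasis n X₀) (hX₀fin : X₀.Finite)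
    {ψ : Equiv.Perm V} (hψ : IsHom n ⇑ψ) (hper : Periodic ψ)
    {Y : Set V} (hY : Expansion n X₀ Y) (hsnf : SemiNormal n ψ Y) :
    ∀ y ∈ Y, ψ y ∈ Y := by
  intro y hy
  have hycl : y ∈ wordClosure n Y := mem_wordClosure_self hy
  have h1 : ψ y ∈ wordClosure n Y := by
    have := sn_orbit hper hsnf hycl 1
    rwa [zpow_one] at this
  obtain ⟨y₁, hy₁, Γ₁, hΓ₁⟩ := h1
  have claim : ∀ k : ℕ, ∃ z ∈ Y, ∃ W, (ψ ^ (k + 1)) y = applyWord z (W ++ Γ₁) := by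
    intro k
    induction k with
    | zero => exact ⟨y₁, hy₁, [], by simpa [pow_one] using hΓ₁⟩
    | succ k ih =>
        obtain ⟨z, hz, W, hW⟩ := ih
        have hzc : ψ z ∈ wordClosure n Y := by
          have := sn_orbit hper hsnf (mem_wordClosure_self hz) 1
          rwa [zpow_one] at this
        obtain ⟨z', hz', W', hW'⟩ := hzc
        refine ⟨z', hz', W' ++ W, ?_⟩
        have hstep : (ψ ^ (k + 1 + 1)) y = ψ ((ψ ^ (k + 1)) y) := by
          rw [pow_succ']
          rfl
        rw [hstep, hW, hom_applyWord hψ, hW', ← applyWord_append, List.append_assoc]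
  obtain ⟨p, hp, hpy⟩ := hper y
  obtain ⟨z, hz, W, hW⟩ := claim (p - 1)
  have hp1 : p - 1 + 1 = p := by omega
  rw [hp1, hpy] at hW
  have := root_uniq hn hX₀ hX₀fin hY z hz y hy (W ++ Γ₁) [] hW.symm
  have hΓnil : Γ₁ = [] := (List.append_eq_nil_iff.mp this.2).2
  rw [hΓnil] at hΓ₁
  rw [applyWord_nil] at hΓ₁
  rw [hΓ₁]
  exact hy₁

lemma perm_pow_maps (hn : 2 ≤ n) {X₀ : Set V} (hX₀ : IsBasis n X₀) (hX₀fin : X₀.Finite)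
    {ψ : Equiv.Perm V} (hψ : IsHom n ⇑ψ) (hper : Periodic ψ)
    {Y : Set V} (hY : Expansion n X₀ Y) (hsnf : SemiNormal n ψ Y) :
    ∀ (k : ℕ), ∀ y ∈ Y, (ψ ^ k) y ∈ Y := by
  intro k
  induction k with
  | zero => intro y hy; simpa using hy
  | succ k ih =>
      intro y hy
      have h1 : (ψ ^ (k + 1)) y = ψ ((ψ ^ k) y) := by
        rw [pow_succ']
        rfl
      rw [h1]
      exact perm_maps hn hX₀ hX₀fin hψ hper hY hsnf _ (ih y hy)

lemma perm_inv_maps (hn : 2 ≤ n) {X₀ : Set V} (hX₀ : IsBasis n X₀) (hX₀fin : X₀.Finite)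
    {ψ : Equiv.Perm V} (hψ : IsHom n ⇑ψ) (hper : Periodic ψ)
    {Y : Set V} (hY : Expansion n X₀ Y) (hsnf : SemiNormal n ψ Y) :
    ∀ y ∈ Y, ψ⁻¹ y ∈ Y := by
  intro y hy
  obtain ⟨p, hp, hpy⟩ := hper y
  have h1 : ψ⁻¹ y = (ψ ^ (p - 1)) y := by
    apply ψ.injective
    rw [← Equiv.Perm.mul_apply, mul_inv_cancel, Equiv.Perm.one_apply]
    have : ψ ((ψ ^ (p - 1)) y) = (ψ ^ p) y := by
      have h2 : ψ * ψ ^ (p - 1) = ψ ^ p := by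
        rw [← pow_succ']
        congr 1
        omega
      rw [← h2]
      rfl
    rw [this, hpy]
  rw [h1]
  exact perm_pow_maps hn hX₀ hX₀fin hψ hper hY hsnf _ y hy

lemma perm_pow_applyWord {ψ : Equiv.Perm V} (hψ : IsHom n ⇑ψ) (k : ℕ) (v : V)
    (Γ : List (Fin n)) : (ψ ^ k) (applyWord v Γ) = applyWord ((ψ ^ k) v) Γ := by
  induction k with
  | zero => simp
  | succ k ih =>
      have h1 : ∀ w : V, (ψ ^ (k + 1)) w = ψ ((ψ ^ k) w) := by
        intro w
        rw [pow_succ']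
        rfl
      rw [h1, ih, hom_applyWord hψ, h1]

/-- Transfer of orbit sizes along descent. -/
lemma orbitsize_transfer (hn : 2 ≤ n) {X₀ : Set V} (hX₀ : IsBasis n X₀)
    (hX₀fin : X₀.Finite) {Y : Set V} (hY : Expansion n X₀ Y)
    {ψ : Equiv.Perm V} (hψ : IsHom n ⇑ψ)
    {x z : V} (hx : x ∈ Y) (hxx : ∀ k : ℕ, (ψ ^ k) x ∈ Y)
    {Γ : List (Fin n)} (hz : z = applyWord x Γ) (d : ℕ) :
    OrbitSize ψ x d ↔ OrbitSize ψ z d := by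
  constructor
  · rintro ⟨hd, hfix, hmin⟩
    refine ⟨hd, ?_, ?_⟩
    · rw [hz, perm_pow_applyWord hψ, hfix]
    · intro e he hed hfe
      rw [hz, perm_pow_applyWord hψ] at hfe
      have := root_uniq hn hX₀ hX₀fin hY _ (hxx e) _ hx Γ Γ hfe
      exact hmin e he hed this.1
  · rintro ⟨hd, hfix, hmin⟩
    refine ⟨hd, ?_, ?_⟩
    · rw [hz, perm_pow_applyWord hψ] at hfix
      exact (root_uniq hn hX₀ hX₀fin hY _ (hxx d) _ hx Γ Γ hfix).1
    · intro e he hed hfe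
      refine hmin e he hed ?_
      rw [hz, perm_pow_applyWord hψ, hfe]

/-- the fiber of `x` in `Y` -/
def fib (n : ℕ) {V : Type} [HigmanAlgebra n V] (Y : Set V) (x : V) : Set V :=
  {z | z ∈ Y ∧ ∃ Γ : List (Fin n), z = applyWord x Γ}

/-- Fibers of an expansion over the original basis: every element factors through
the original, and each fiber has size `≡ 1 (mod n - 1)`. -/
lemma fiber_count (hn : 2 ≤ n) {X₀ : Set V} (hX₀ : IsBasis n X₀) (hX₀fin : X₀.Finite)
    {X Z : Set V} (hX : Expansion n X₀ X) (hXZ : Expansion n X Z) :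
    (∀ z ∈ Z, ∃ x ∈ X, ∃ Γ : List (Fin n), z = applyWord x Γ) ∧
    (∀ x ∈ X, (fib n Z x).ncard ≡ 1 [MOD n - 1]) := by
  induction hXZ with
  | refl =>
      refine ⟨fun z hz => ⟨z, hz, [], rfl⟩, fun x hx => ?_⟩
      have : fib n X x = {x} := by
        ext z
        constructor
        · rintro ⟨hz, Γ, rfl⟩
          have := root_uniq hn hX₀ hX₀fin hX x hx _ hz Γ [] rfl
          simp only [Set.mem_singleton_iff]
          rw [← this.1]
        · rintro rfl
          exact ⟨hx, [], rfl⟩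
      rw [this, Set.ncard_singleton]
  | tail hmid hstep ih =>
      rename_i Ymid Y'
      obtain ⟨ih1, ih2⟩ := ih
      obtain ⟨y, hyY, hY'⟩ := hstep
      have hYmidE : Expansion n X₀ Ymid := hX.trans hmid
      have hY'E : Expansion n X₀ Y' := hYmidE.tail ⟨y, hyY, hY'⟩
      obtain ⟨xy, hxy, Γy, hyw⟩ := ih1 y hyY
      have hchild : ∀ i : Fin n, desc y i = applyWord xy (Γy ++ [i]) := by
        intro i
        rw [applyWord_append, ← hyw, applyWord_singleton]
      constructor
      · intro z' hz'
        rw [hY'] at hz'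
        rcases hz' with ⟨hzY, -⟩ | ⟨i, rfl⟩
        · exact ih1 z' hzY
        · exact ⟨xy, hxy, Γy ++ [i], hchild i⟩
      · intro x hx
        by_cases hxx : x = xy
        · subst hxx
          have hset : fib n Y' x = (fib n Ymid x \ {y}) ∪ Set.range (fun i : Fin n => desc y i) := by
            ext z
            constructor
            · rintro ⟨hz, Γ, rfl⟩
              rw [hY'] at hz
              rcases hz with ⟨hzY, hzny⟩ | ⟨i, hi⟩
              · exact Or.inl ⟨⟨hzY, Γ, rfl⟩, hzny⟩
              · exact Or.inr ⟨i, hi⟩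
            · rintro (⟨⟨hzY, hΓ⟩, hzny⟩ | ⟨i, rfl⟩)
              · exact ⟨by rw [hY']; exact Or.inl ⟨hzY, hzny⟩, hΓ⟩
              · exact ⟨by rw [hY']; exact Or.inr ⟨i, rfl⟩, Γy ++ [i], hchild i⟩
          have hyfib : y ∈ fib n Ymid x := ⟨hyY, Γy, hyw⟩
          have hfibfin : (fib n Ymid x).Finite :=
            (expansion_finite hn hX₀ hX₀fin hYmidE).subset (fun z hz => hz.1)
          have hdisj : Disjoint (fib n Ymid x \ {y}) (Set.range (fun i : Fin n => desc y i)) := by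
            rw [Set.disjoint_left]
            rintro z ⟨⟨hzY, -⟩, -⟩ ⟨i, rfl⟩
            have := root_uniq hn hX₀ hX₀fin hYmidE _ hzY y hyY [] [i]
              (by rw [applyWord_nil, applyWord_singleton])
            simp at this
          have hinj : Function.Injective (fun i : Fin n => desc y i) := by
            intro i j hij
            have := root_uniq hn hX₀ hX₀fin hYmidE y hyY y hyY [i] [j]
              (by rw [applyWord_singleton, applyWord_singleton]; exact hij)
            simpa using this.2
          have hrange : (Set.range (fun i : Fin n => desc y i)).ncard = n := by
            rw [← Set.image_univ, Set.ncard_image_of_injective _ hinj, Set.ncard_univ,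
              Nat.card_eq_fintype_card, Fintype.card_fin]
          have hc1 : 1 ≤ (fib n Ymid x).ncard := (Set.ncard_pos hfibfin).mpr ⟨y, hyfib⟩
          have hcard : (fib n Y' x).ncard = ((fib n Ymid x).ncard - 1) + n := by
            rw [hset, Set.ncard_union_eq hdisj (hfibfin.diff) (Set.finite_range _),
              Set.ncard_diff_singleton_of_mem hyfib, hrange]
          rw [hcard]
          have heq : ((fib n Ymid x).ncard - 1) + n = (fib n Ymid x).ncard + (n - 1) := by
            omega
          rw [heq]
          have h2 : (fib n Ymid x).ncard + (n - 1) ≡ 1 + 0 [MOD n - 1] :=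
            Nat.ModEq.add (ih2 x hx) ((Nat.modEq_zero_iff_dvd).mpr dvd_rfl)
          simpa using h2
        · have hset : fib n Y' x = fib n Ymid x := by
            ext z
            constructor
            · rintro ⟨hz, Γ, rfl⟩
              rw [hY'] at hz
              rcases hz with ⟨hzY, -⟩ | ⟨i, hi⟩
              · exact ⟨hzY, Γ, rfl⟩
              · exfalso
                refine hxx ?_
                exact (root_uniq hn hX₀ hX₀fin hX x hx xy hxy Γ (Γy ++ [i])
                  (hi.symm.trans (hchild i))).1
            · rintro ⟨hzY, Γ, rfl⟩
              refine ⟨?_, Γ, rfl⟩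
              rw [hY']
              refine Or.inl ⟨hzY, ?_⟩
              simp only [Set.mem_singleton_iff]
              intro hzy
              exact hxx (root_uniq hn hX₀ hX₀fin hX x hx xy hxy Γ Γy (hzy.trans hyw)).1
          rw [hset]
          exact ih2 x hx

lemma fiber_nonempty (hn : 2 ≤ n) {X Z : Set V} (hXZ : Expansion n X Z) :
    ∀ x ∈ X, ∃ z ∈ Z, ∃ Γ : List (Fin n), z = applyWord x Γ := by
  induction hXZ with
  | refl => exact fun x hx => ⟨x, hx, [], rfl⟩
  | tail hmid hstep ih =>
      rename_i Ymid Y'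
      obtain ⟨y, hyY, hY'⟩ := hstep
      intro x hx
      obtain ⟨z, hzY, Γ, hΓ⟩ := ih x hx
      by_cases hzy : z = y
      · subst hzy
        have hnpos : 0 < n := by omega
        refine ⟨desc z ⟨0, hnpos⟩, ?_, Γ ++ [⟨0, hnpos⟩], ?_⟩
        · rw [hY']
          exact Or.inr ⟨⟨0, hnpos⟩, rfl⟩
        · rw [applyWord_append, ← hΓ, applyWord_singleton]
      · refine ⟨z, ?_, Γ, hΓ⟩
        rw [hY']
        exact Or.inl ⟨hzY, hzy⟩

lemma orbitsize_perm {ψ : Equiv.Perm V} {x : V} {d : ℕ} (h : OrbitSize ψ x d) :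
    OrbitSize ψ (ψ x) d := by
  obtain ⟨hd, hfix, hmin⟩ := h
  have hcomm : ∀ e : ℕ, (ψ ^ e) (ψ x) = ψ ((ψ ^ e) x) := by
    intro e
    rw [← Equiv.Perm.mul_apply, ← Equiv.Perm.mul_apply, ← pow_succ, ← pow_succ']
  refine ⟨hd, ?_, ?_⟩
  · rw [hcomm, hfix]
  · intro e he hed hfe
    rw [hcomm] at hfe
    exact hmin e he hed (ψ.injective hfe)

/-- Summing an orbit-invariant function over a `ψ`-invariant set all of whose
elements have orbit size `d`. -/
lemma orbit_sum {V : Type} (ψ : Equiv.Perm V) (d m : ℕ) (F : V → ℕ) :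
    ∀ s : Finset V, (∀ v ∈ s, ψ v ∈ s) → (∀ v ∈ s, OrbitSize ψ v d) →
      (∀ v ∈ s, F (ψ v) = F v) → (∀ v ∈ s, F v ≡ 1 [MOD m]) →
      d ∣ s.card ∧ (∑ v ∈ s, F v) ≡ s.card [MOD d * m] := by
  classical
  intro s
  induction s using Finset.strongInduction with
  | _ s ih =>
    intro hcl horb hinv hmod
    rcases s.eq_empty_or_nonempty with rfl | ⟨x, hx⟩
    · simp [Nat.ModEq.refl]
    · have hd : 0 < d := (horb x hx).1
      have hpow : ∀ i : ℕ, (ψ ^ i) x ∈ s := by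
        intro i
        induction i with
        | zero => simpa using hx
        | succ i ihp =>
            have : (ψ ^ (i + 1)) x = ψ ((ψ ^ i) x) := by rw [pow_succ']; rfl
            rw [this]
            exact hcl _ ihp
      have key : ∀ i j : ℕ, i < j → j < d → (ψ ^ i) x = (ψ ^ j) x → False := by
        intro i j hij hjd h
        have h2 : (ψ ^ (j - i)) ((ψ ^ i) x) = (ψ ^ i) x := by
          rw [← Equiv.Perm.mul_apply, ← pow_add, Nat.sub_add_cancel hij.le]
          exact h.symm
        exact (horb _ (hpow i)).2.2 (j - i) (by omega) (by omega) h2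
      set O : Finset V := (Finset.range d).image (fun i => (ψ ^ i) x) with hO
      have hOsub : O ⊆ s := by
        intro v hv
        rw [hO, Finset.mem_image] at hv
        obtain ⟨i, -, rfl⟩ := hv
        exact hpow i
      have hinjOn : ∀ i ∈ Finset.range d, ∀ j ∈ Finset.range d,
          (ψ ^ i) x = (ψ ^ j) x → i = j := by
        intro i hi j hj h
        rw [Finset.mem_range] at hi hj
        rcases lt_trichotomy i j with h' | h' | h'
        · exact absurd h (fun h => key i j h' hj h)
        · exact h'
        · exact absurd h.symm (fun h => key j i h' hi h)
      have hOcard : O.card = d := by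
        rw [hO, Finset.card_image_of_injOn hinjOn, Finset.card_range]
      have hxO : x ∈ O := by
        rw [hO, Finset.mem_image]
        exact ⟨0, Finset.mem_range.mpr hd, by simp⟩
      have hcl' : ∀ v ∈ s \ O, ψ v ∈ s \ O := by
        intro v hv
        rw [Finset.mem_sdiff] at hv ⊢
        refine ⟨hcl v hv.1, ?_⟩
        intro hpsiO
        refine hv.2 ?_
        rw [hO, Finset.mem_image] at hpsiO ⊢
        obtain ⟨i, hi, hieq⟩ := hpsiO
        rw [Finset.mem_range] at hi
        rcases Nat.eq_zero_or_pos i with rfl | hipos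
        · have hmem : d - 1 ∈ Finset.range d := Finset.mem_range.mpr (Nat.sub_lt hd Nat.one_pos)
          refine ⟨d - 1, hmem, ?_⟩
          apply ψ.injective
          have h1 : ψ ((ψ ^ (d - 1)) x) = (ψ ^ d) x := by
            rw [← Equiv.Perm.mul_apply, ← pow_succ']
            have hde : d - 1 + 1 = d := by omega
            rw [hde]
          rw [h1, (horb x hx).2.1]
          simpa using hieq
        · have hmem : i - 1 ∈ Finset.range d :=
            Finset.mem_range.mpr (lt_of_le_of_lt (Nat.sub_le i 1) hi)
          refine ⟨i - 1, hmem, ?_⟩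
          apply ψ.injective
          have h1 : ψ ((ψ ^ (i - 1)) x) = (ψ ^ i) x := by
            rw [← Equiv.Perm.mul_apply, ← pow_succ']
            have hie : i - 1 + 1 = i := by omega
            rw [hie]
          rw [h1, hieq]
      have hssub : s \ O ⊂ s := Finset.sdiff_ssubset hOsub ⟨x, hxO⟩
      obtain ⟨ihdvd, ihmod⟩ := ih (s \ O) hssub hcl'
        (fun v hv => horb v (Finset.mem_sdiff.mp hv).1)
        (fun v hv => hinv v (Finset.mem_sdiff.mp hv).1)
        (fun v hv => hmod v (Finset.mem_sdiff.mp hv).1)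
      have hFc : ∀ i : ℕ, F ((ψ ^ i) x) = F x := by
        intro i
        induction i with
        | zero => simp
        | succ i ihp =>
            have : (ψ ^ (i + 1)) x = ψ ((ψ ^ i) x) := by rw [pow_succ']; rfl
            rw [this, hinv _ (hpow i), ihp]
      have hsumO : ∑ v ∈ O, F v = d * F x := by
        rw [hO, Finset.sum_image hinjOn]
        rw [Finset.sum_congr rfl (fun i _ => hFc i)]
        simp [mul_comm]
      have hcards : s.card = (s \ O).card + d := by
        rw [Finset.card_sdiff_of_subset hOsub, hOcard]
        have := Finset.card_le_card hOsub
        omega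
      have hsums : ∑ v ∈ s, F v = (∑ v ∈ s \ O, F v) + d * F x := by
        rw [← hsumO, Finset.sum_sdiff hOsub]
      constructor
      · rw [hcards]
        exact Nat.dvd_add ihdvd dvd_rfl
      · rw [hsums, hcards]
        refine Nat.ModEq.add ihmod ?_
        have := Nat.ModEq.mul_left' (c := d) (hmod x hx)
        simpa using this

end Stmt13Aux

open Stmt13Aux in
/-- Let `ψ` be a periodic automorphism of `V_{n,r}` in semi-normal form with respect
to an `A`-basis `X`, and let `Z` be an expansion of `X` with respect to which `ψ` is
also in semi-normal form.  Then `T_ψ(X) = T_ψ(Z)` and for every `d` the multiplicities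
satisfy `m_ψ(d, X) ≡ m_ψ(d, Z) (mod n-1)`. -/
theorem stmt13 (n r : ℕ) (hn : 2 ≤ n) {V : Type} [HigmanAlgebra n V]
    (X₀ : Set V) (hX₀ : IsBasis n X₀) (hX₀fin : X₀.Finite) (hX₀card : X₀.ncard = r)
    (hr : 1 ≤ r)
    (ψ : Equiv.Perm V) (hψ : IsHom n ⇑ψ) (hper : Periodic ψ)
    (X : Set V) (hX : Expansion n X₀ X) (hsnfX : SemiNormal n ψ X)
    (Z : Set V) (hZ : Expansion n X Z) (hsnfZ : SemiNormal n ψ Z) :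
    CycType ψ X = CycType ψ Z ∧
    ∀ d : ℕ, Mult ψ X d ≡ Mult ψ Z d [MOD n - 1] := by
  classical
  have hZE : Expansion n X₀ Z := hX.trans hZ
  have hXfin : X.Finite := expansion_finite hn hX₀ hX₀fin hX
  have hZfin : Z.Finite := expansion_finite hn hX₀ hX₀fin hZE
  have permX : ∀ x ∈ X, ψ x ∈ X := perm_maps hn hX₀ hX₀fin hψ hper hX hsnfX
  have powX : ∀ k : ℕ, ∀ x ∈ X, (ψ ^ k) x ∈ X := perm_pow_maps hn hX₀ hX₀fin hψ hper hX hsnfX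
  have permZ : ∀ z ∈ Z, ψ z ∈ Z := perm_maps hn hX₀ hX₀fin hψ hper hZE hsnfZ
  have invZ : ∀ z ∈ Z, ψ⁻¹ z ∈ Z := perm_inv_maps hn hX₀ hX₀fin hψ hper hZE hsnfZ
  obtain ⟨factor, fibmod⟩ := fiber_count hn hX₀ hX₀fin hX hZ
  have hrtex : ∀ z : V, ∃ x : V, z ∈ Z → (x ∈ X ∧ ∃ Γ : List (Fin n), z = applyWord x Γ) := by
    intro z
    by_cases hz : z ∈ Z
    · obtain ⟨x, hx, hΓ⟩ := factor z hz
      exact ⟨x, fun _ => ⟨hx, hΓ⟩⟩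
    · exact ⟨z, fun h => absurd h hz⟩
  choose rt hrt using hrtex
  have rtX : ∀ z ∈ Z, rt z ∈ X := fun z hz => (hrt z hz).1
  have rtw : ∀ z ∈ Z, ∃ Γ : List (Fin n), z = applyWord (rt z) Γ := fun z hz => (hrt z hz).2
  have rtuniq : ∀ z ∈ Z, ∀ x ∈ X, (∃ Γ : List (Fin n), z = applyWord x Γ) → rt z = x := by
    rintro z hz x hx ⟨Γ, hΓ⟩
    obtain ⟨Γ', hΓ'⟩ := rtw z hz
    exact (root_uniq hn hX₀ hX₀fin hX (rt z) (rtX z hz) x hx Γ' Γ (hΓ'.symm.trans hΓ)).1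
  have orbiff : ∀ z ∈ Z, ∀ d : ℕ, OrbitSize ψ (rt z) d ↔ OrbitSize ψ z d := by
    intro z hz d
    obtain ⟨Γ, hΓ⟩ := rtw z hz
    exact orbitsize_transfer hn hX₀ hX₀fin hX hψ (rtX z hz)
      (fun k => powX k _ (rtX z hz)) hΓ d
  constructor
  · ext d
    simp only [CycType, Set.mem_setOf_eq]
    constructor
    · rintro ⟨x, hx, hor⟩
      obtain ⟨z, hzZ, Γ, hΓ⟩ := fiber_nonempty hn hZ x hx
      exact ⟨z, hzZ,
        (orbitsize_transfer hn hX₀ hX₀fin hX hψ hx (fun k => powX k x hx) hΓ d).mp hor⟩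
    · rintro ⟨z, hz, hor⟩
      exact ⟨rt z, rtX z hz, (orbiff z hz d).mpr hor⟩
  · intro d
    rcases Nat.eq_zero_or_pos d with rfl | hd
    · have h00 : Mult ψ X 0 = Mult ψ Z 0 := by simp [Mult]
      rw [h00]
    have hSXfin : ({x ∈ X | OrbitSize ψ x d}).Finite := hXfin.subset (fun x hx => hx.1)
    have hSZfin : ({z ∈ Z | OrbitSize ψ z d}).Finite := hZfin.subset (fun z hz => hz.1)
    have memsX : ∀ x : V, x ∈ hSXfin.toFinset ↔ x ∈ X ∧ OrbitSize ψ x d := by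
      intro x
      rw [Set.Finite.mem_toFinset]
      exact Iff.rfl
    have memsZ : ∀ z : V, z ∈ hSZfin.toFinset ↔ z ∈ Z ∧ OrbitSize ψ z d := by
      intro z
      rw [Set.Finite.mem_toFinset]
      exact Iff.rfl
    have memzF : ∀ z : V, z ∈ hZfin.toFinset ↔ z ∈ Z := fun z => Set.Finite.mem_toFinset _
    set F : V → ℕ := fun x => (hZfin.toFinset.filter (fun z => rt z = x)).card with hF
    have hmap : ∀ z ∈ hSZfin.toFinset, rt z ∈ hSXfin.toFinset := by
      intro z hz
      rw [memsZ] at hz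
      rw [memsX]
      exact ⟨rtX z hz.1, (orbiff z hz.1 d).mpr hz.2⟩
    have hcardsum : hSZfin.toFinset.card
        = ∑ x ∈ hSXfin.toFinset, (hSZfin.toFinset.filter (fun z => rt z = x)).card :=
      Finset.card_eq_sum_card_fiberwise hmap
    have hfiltereq : ∀ x ∈ hSXfin.toFinset,
        hSZfin.toFinset.filter (fun z => rt z = x)
          = hZfin.toFinset.filter (fun z => rt z = x) := by
      intro x hx
      ext z
      simp only [Finset.mem_filter]
      constructor
      · rintro ⟨hz1, hz2⟩
        exact ⟨(memzF z).mpr ((memsZ z).mp hz1).1, hz2⟩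
      · rintro ⟨hz1, hz2⟩
        have hzZ : z ∈ Z := (memzF z).mp hz1
        refine ⟨(memsZ z).mpr ⟨hzZ, ?_⟩, hz2⟩
        have hxor := ((memsX x).mp hx).2
        rw [← hz2] at hxor
        exact (orbiff z hzZ d).mp hxor
    have hsZsum : hSZfin.toFinset.card = ∑ x ∈ hSXfin.toFinset, F x := by
      rw [hcardsum]
      exact Finset.sum_congr rfl (fun x hx => by simp only [hF]; rw [hfiltereq x hx])
    have hFinv : ∀ x ∈ X, F (ψ x) = F x := by
      intro x hx
      simp only [hF]
      refine Finset.card_nbij' (fun z => ψ⁻¹ z) (fun z => ψ z) ?_ ?_ ?_ ?_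
      · intro z hz
        rw [Finset.mem_coe, Finset.mem_filter] at hz ⊢
        obtain ⟨hz1, hz2⟩ := hz
        have hzZ : z ∈ Z := (memzF z).mp hz1
        refine ⟨(memzF _).mpr (invZ z hzZ), ?_⟩
        obtain ⟨Γ, hΓ⟩ := rtw z hzZ
        rw [hz2] at hΓ
        have h2 : ψ (applyWord x Γ) = z := by rw [hom_applyWord hψ, ← hΓ]
        have h3 : ψ⁻¹ z = applyWord x Γ := by
          apply ψ.injective
          rw [← Equiv.Perm.mul_apply, mul_inv_cancel, Equiv.Perm.one_apply, h2]
        exact rtuniq _ (invZ z hzZ) x hx ⟨Γ, h3⟩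
      · intro z hz
        rw [Finset.mem_coe, Finset.mem_filter] at hz ⊢
        obtain ⟨hz1, hz2⟩ := hz
        have hzZ : z ∈ Z := (memzF z).mp hz1
        refine ⟨(memzF _).mpr (permZ z hzZ), ?_⟩
        obtain ⟨Γ, hΓ⟩ := rtw z hzZ
        rw [hz2] at hΓ
        have h2 : ψ z = applyWord (ψ x) Γ := by rw [hΓ, hom_applyWord hψ]
        exact rtuniq _ (permZ z hzZ) (ψ x) (permX x hx) ⟨Γ, h2⟩
      · intro z _
        simp
      · intro z _
        simp
    have hFmod : ∀ x ∈ X, F x ≡ 1 [MOD n - 1] := by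
      intro x hx
      have hset : fib n Z x = ↑(hZfin.toFinset.filter (fun z => rt z = x)) := by
        ext z
        constructor
        · rintro ⟨hzZ, Γ, hΓ⟩
          rw [Finset.mem_coe, Finset.mem_filter]
          exact ⟨(memzF z).mpr hzZ, rtuniq z hzZ x hx ⟨Γ, hΓ⟩⟩
        · intro hz
          rw [Finset.mem_coe, Finset.mem_filter] at hz
          have hzZ : z ∈ Z := (memzF z).mp hz.1
          refine ⟨hzZ, ?_⟩
          rw [← hz.2]
          exact rtw z hzZ
      have h1 := fibmod x hx
      rwa [hset, Set.ncard_coe_finset] at h1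
    have hclX : ∀ v ∈ hSXfin.toFinset, ψ v ∈ hSXfin.toFinset := by
      intro v hv
      rw [memsX] at hv ⊢
      exact ⟨permX v hv.1, orbitsize_perm hv.2⟩
    have hclZ : ∀ v ∈ hSZfin.toFinset, ψ v ∈ hSZfin.toFinset := by
      intro v hv
      rw [memsZ] at hv ⊢
      exact ⟨permZ v hv.1, orbitsize_perm hv.2⟩
    obtain ⟨hdvdX, hmodX⟩ := orbit_sum ψ d (n - 1) F hSXfin.toFinset hclX
      (fun v hv => ((memsX v).mp hv).2) (fun v hv => hFinv v ((memsX v).mp hv).1)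
      (fun v hv => hFmod v ((memsX v).mp hv).1)
    obtain ⟨hdvdZ, -⟩ := orbit_sum ψ d (n - 1) (fun _ => 1) hSZfin.toFinset hclZ
      (fun v hv => ((memsZ v).mp hv).2) (fun _ _ => rfl) (fun _ _ => Nat.ModEq.refl 1)
    have hmodZX : hSZfin.toFinset.card ≡ hSXfin.toFinset.card [MOD d * (n - 1)] := by
      rw [hsZsum]
      exact hmodX
    have hMX : Mult ψ X d = hSXfin.toFinset.card / d := by
      show ({x ∈ X | OrbitSize ψ x d}).ncard / d = _
      rw [Set.ncard_eq_toFinset_card _ hSXfin]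
    have hMZ : Mult ψ Z d = hSZfin.toFinset.card / d := by
      show ({z ∈ Z | OrbitSize ψ z d}).ncard / d = _
      rw [Set.ncard_eq_toFinset_card _ hSZfin]
    obtain ⟨a, ha⟩ := hdvdX
    obtain ⟨b, hb⟩ := hdvdZ
    rw [hMX, hMZ, ha, hb, Nat.mul_div_cancel_left a hd, Nat.mul_div_cancel_left b hd]
    have hfinal : d * a ≡ d * b [MOD d * (n - 1)] := by
      rw [← ha, ← hb]
      exact hmodZX.symm
    exact Nat.ModEq.mul_left_cancel' hd.ne' hfinal
end

section
/- Two periodic automorphisms ψ, φ of V_{n,r}, in semi-normal form with respect to A-bases X_ψ and X_φ respectively, are conjugate in G_{n,r} if and only if they have the same cycle type T_ψ = T_φ and m_ψ(d, X_ψ) ≡ m_φ(d, X_φ) (mod n−1) for every positive integer d. -/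
open HigmanAlgebra

section Basics
variable {n : ℕ} {V : Type} [HigmanAlgebra n V]

lemma applyWord_nil (v : V) : applyWord v ([] : List (Fin n)) = v := rfl

lemma applyWord_cons (v : V) (i : Fin n) (Γ : List (Fin n)) :
    applyWord v (i :: Γ) = applyWord (desc v i) Γ := rfl

lemma applyWord_append (v : V) (Γ Δ : List (Fin n)) :
    applyWord v (Γ ++ Δ) = applyWord (applyWord v Γ) Δ := by
  simp [applyWord, List.foldl_append]

lemma IsHom.applyWord {W : Type} [HigmanAlgebra n W] {f : V → W} (hf : IsHom n f)
    (v : V) (Γ : List (Fin n)) : f (applyWord v Γ) = applyWord (f v) Γ := by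
  induction Γ generalizing v with
  | nil => rfl
  | cons i Γ ih => rw [applyWord_cons, applyWord_cons, ih, hf.1]

lemma IsHom.comp {W U : Type} [HigmanAlgebra n W] [HigmanAlgebra n U]
    {f : V → W} {g : W → U} (hf : IsHom n f) (hg : IsHom n g) : IsHom n (g ∘ f) := by
  constructor
  · intro v i; simp [Function.comp, hf.1, hg.1]
  · intro h
    show g (f (contr h)) = _
    rw [hf.2, hg.2]
    rfl

lemma isHom_id : IsHom n (id : V → V) := ⟨fun _ _ => rfl, fun _ => rfl⟩

lemma IsHom.pow {ψ : Equiv.Perm V} (hψ : IsHom n ⇑ψ) (e : ℕ) : IsHom n ⇑(ψ ^ e) := by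
  induction e with
  | zero => simpa using (isHom_id : IsHom n (id : V → V))
  | succ e ih =>
      have : ⇑(ψ ^ (e+1)) = ⇑ψ ∘ ⇑(ψ ^ e) := by
        ext v; rw [pow_succ']; rfl
      rw [this]; exact ih.comp hψ

lemma IsHom.symm {ψ : Equiv.Perm V} (hψ : IsHom n ⇑ψ) : IsHom n ⇑ψ.symm := by
  constructor
  · intro v i
    apply ψ.injective
    rw [hψ.1, Equiv.apply_symm_apply, Equiv.apply_symm_apply]
  · intro g
    apply ψ.injective
    rw [hψ.2, Equiv.apply_symm_apply]
    congr 1; ext i; simp [Function.comp, Equiv.apply_symm_apply]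

lemma mem_wordClosure_self {X : Set V} {x : V} (hx : x ∈ X) : x ∈ wordClosure n X :=
  ⟨x, hx, [], rfl⟩

lemma applyWord_mem_wordClosure {X : Set V} {y : V} (hy : y ∈ wordClosure n X)
    (Γ : List (Fin n)) : applyWord y Γ ∈ wordClosure n X := by
  obtain ⟨x, hx, Δ, rfl⟩ := hy
  exact ⟨x, hx, Δ ++ Γ, (applyWord_append x Δ Γ).symm⟩

lemma pow_applyWord {ψ : Equiv.Perm V} (hψ : IsHom n ⇑ψ) (e : ℕ) (v : V) (Γ : List (Fin n)) :
    (ψ ^ e) (applyWord v Γ) = applyWord ((ψ ^ e) v) Γ :=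
  (hψ.pow e).applyWord v Γ

end Basics
section Free
variable {n : ℕ} {V : Type} [HigmanAlgebra n V]

/-- Auxiliary stream algebra used to prove freeness. -/
def StrAlg (n : ℕ) (V : Type) : Type := ℕ → ℕ × V

instance strHA (n : ℕ) [NeZero n] (V : Type) : HigmanAlgebra n (StrAlg n V) where
  desc w i := fun m => w (m * n + i.val)
  contr f := fun k => f ⟨k % n, Nat.mod_lt _ (Nat.pos_of_ne_zero (NeZero.ne n))⟩ (k / n)
  contr_desc w := by
    funext k
    show w (k / n * n + k % n) = w k
    rw [Nat.mul_comm, Nat.div_add_mod]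
  desc_contr f i := by
    funext m
    show f ⟨(m * n + i.val) % n, _⟩ ((m * n + i.val) / n) = f i m
    have hn : 0 < n := Nat.pos_of_ne_zero (NeZero.ne n)
    have h1 : (m * n + i.val) % n = i.val := by
      rw [Nat.add_comm, Nat.add_mul_mod_self_right, Nat.mod_eq_of_lt i.isLt]
    have h2 : (m * n + i.val) / n = m := by
      rw [Nat.add_comm, Nat.add_mul_div_right _ _ hn, Nat.div_eq_of_lt i.isLt, Nat.zero_add]
    congr 1
    exact Fin.ext h1

def wcode {n : ℕ} : List (Fin n) → ℕ
  | [] => 0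
  | i :: Γ => wcode Γ * n + i.val

lemma wcode_inj : ∀ {Γ Γ' : List (Fin n)}, Γ.length = Γ'.length → wcode Γ = wcode Γ' → Γ = Γ'
  | [], [], _, _ => rfl
  | i :: Γ, j :: Δ, hl, hc => by
      have hl' : Γ.length = Δ.length := by simpa using hl
      have hc' : wcode Γ * n + i.val = wcode Δ * n + j.val := hc
      have hi : i.val = j.val := by
        have h1 : (wcode Γ * n + i.val) % n = i.val := by
          rw [Nat.add_comm, Nat.add_mul_mod_self_right, Nat.mod_eq_of_lt i.isLt]
        have h2 : (wcode Δ * n + j.val) % n = j.val := by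
          rw [Nat.add_comm, Nat.add_mul_mod_self_right, Nat.mod_eq_of_lt j.isLt]
        rw [← h1, ← h2, hc']
      have hw : wcode Γ = wcode Δ := by
        have hn : 0 < n := i.pos
        have h1 : (wcode Γ * n + i.val) / n = wcode Γ := by
          rw [Nat.add_comm, Nat.add_mul_div_right _ _ hn, Nat.div_eq_of_lt i.isLt, Nat.zero_add]
        have h2 : (wcode Δ * n + j.val) / n = wcode Δ := by
          rw [Nat.add_comm, Nat.add_mul_div_right _ _ hn, Nat.div_eq_of_lt j.isLt, Nat.zero_add]
        rw [← h1, ← h2, hc']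
      have := wcode_inj hl' hw
      subst this
      exact by rw [Fin.ext hi]

lemma strAlg_applyWord [NeZero n] (w : StrAlg n V) :
    ∀ (Γ : List (Fin n)) (m : ℕ),
      applyWord w Γ m = w (m * n ^ Γ.length + wcode Γ)
  | [], m => by simp [applyWord_nil, wcode]
  | i :: Γ, m => by
      rw [applyWord_cons, strAlg_applyWord _ Γ m]
      show w ((m * n ^ Γ.length + wcode Γ) * n + i.val) = _
      congr 1
      show _ = m * n ^ (Γ.length + 1) + wcode (i :: Γ)
      show _ = m * n ^ (Γ.length + 1) + (wcode Γ * n + i.val)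
      ring

/-- Freeness: representations over a basis are unique. -/
lemma basis_free (hn : 2 ≤ n) {X : Set V} (hX : IsBasis n X) {x x' : V}
    (hx : x ∈ X) (hx' : x' ∈ X) {Γ Γ' : List (Fin n)}
    (h : applyWord x Γ = applyWord x' Γ') : x = x' ∧ Γ = Γ' := by
  letI : NeZero n := ⟨by omega⟩
  obtain ⟨H, ⟨Hhom, Hext⟩, -⟩ :=
    hX (StrAlg n V) (fun x => (fun m => (m, x.val) : StrAlg n V))
  have key : applyWord (H x) Γ = applyWord (H x') Γ' := by
    rw [← Hhom.applyWord, ← Hhom.applyWord, h]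
  have hHx : H x = fun m => (m, x) := Hext ⟨x, hx⟩
  have hHx' : H x' = fun m => (m, x') := Hext ⟨x', hx'⟩
  rw [hHx, hHx'] at key
  have k0 := congrFun key 0
  have k1 := congrFun key 1
  erw [strAlg_applyWord, strAlg_applyWord] at k0
  erw [strAlg_applyWord, strAlg_applyWord] at k1
  simp only [Nat.zero_mul, Nat.zero_add, Nat.one_mul] at k0 k1
  have hxx : x = x' := congrArg Prod.snd k0
  have hcode : wcode Γ = wcode Γ' := congrArg Prod.fst k0
  have hpow : n ^ Γ.length + wcode Γ = n ^ Γ'.length + wcode Γ' := congrArg Prod.fst k1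
  have hlen : Γ.length = Γ'.length := by
    have : n ^ Γ.length = n ^ Γ'.length := by omega
    exact Nat.pow_right_injective hn this
  exact ⟨hxx, wcode_inj hlen hcode⟩

end Free
section Descend
variable {n : ℕ} {V : Type} [HigmanAlgebra n V]

/-- The set of elements all of whose deep enough descendants lie in `X⟨A⟩`. -/
def goodSet (n : ℕ) {V : Type} [HigmanAlgebra n V] (X : Set V) : Set V :=
  {v | ∃ N, ∀ Γ : List (Fin n), N ≤ Γ.length → applyWord v Γ ∈ wordClosure n X}

noncomputable def goodAlg (X : Set V) : HigmanAlgebra n (goodSet n X) where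
  desc v i := ⟨desc v.val i, by
    obtain ⟨N, hN⟩ := v.2
    exact ⟨N, fun Γ hΓ => hN (i :: Γ) (by simp; omega)⟩⟩
  contr f := ⟨contr (fun i => (f i).val), by
    refine ⟨(Finset.univ.sup fun i => Classical.choose (f i).2) + 1, fun Γ hΓ => ?_⟩
    match Γ, hΓ with
    | i :: Γ', hΓ => ?_
    have : applyWord (contr (fun i => (f i).val)) (i :: Γ')
        = applyWord ((f i).val) Γ' := by
      rw [applyWord_cons, desc_contr]
    rw [this]
    refine Classical.choose_spec (f i).2 Γ' ?_
    have h1 : Classical.choose (f i).2 ≤ Finset.univ.sup fun i => Classical.choose (f i).2 :=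
      Finset.le_sup (f := fun i => Classical.choose (f i).2) (Finset.mem_univ i)
    simp only [List.length_cons] at hΓ
    omega⟩
  contr_desc v := by
    apply Subtype.ext
    show contr (fun i => desc v.val i) = v.val
    exact contr_desc v.val
  desc_contr f i := by
    apply Subtype.ext
    show desc (contr (fun j => (f j).val)) i = (f i).val
    exact desc_contr _ i

lemma isHom_subtype_val (X : Set V) :
    letI := (goodAlg X : HigmanAlgebra n (goodSet n X))
    IsHom n (Subtype.val : goodSet n X → V) := by
  letI := (goodAlg X : HigmanAlgebra n (goodSet n X))
  exact ⟨fun v i => rfl, fun g => rfl⟩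

/-- Every element of `V` eventually descends into `X⟨A⟩`, for a basis `X`. -/
lemma basis_descend {X : Set V} (hX : IsBasis n X) (v : V) :
    ∃ N, ∀ Γ : List (Fin n), N ≤ Γ.length → applyWord v Γ ∈ wordClosure n X := by
  letI := (goodAlg X : HigmanAlgebra n (goodSet n X))
  obtain ⟨H, ⟨Hhom, Hext⟩, -⟩ := hX (goodSet n X)
    (fun x => ⟨x.val, 0, fun Γ _ => applyWord_mem_wordClosure (mem_wordClosure_self x.2) Γ⟩)
  obtain ⟨G, -, Guniq⟩ := hX V (fun x => x.val)
  have h1 : (Subtype.val ∘ H) = id := by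
    have e1 := Guniq (Subtype.val ∘ H) ⟨Hhom.comp (isHom_subtype_val X), fun x => by
      simp only [Function.comp_apply, Hext x]⟩
    have e2 := Guniq id ⟨isHom_id, fun x => rfl⟩
    rw [e1, e2]
  have h2 : (H v).val = v := congrFun h1 v
  obtain ⟨N, hN⟩ := (H v).2
  exact ⟨N, by rw [← h2]; exact hN⟩

end Descend

section ExpBasis
variable {n : ℕ} {V : Type} [HigmanAlgebra n V]

lemma simpleExpansion_isBasis {Y Z : Set V} (h : SimpleExpansion n Y Z)
    (hY : IsBasis n Y) : IsBasis n Z := by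
  classical
  obtain ⟨y, hyY, hZ⟩ := h
  intro W _ f
  have hmemd : ∀ i : Fin n, desc y i ∈ Z := fun i => hZ ▸ Or.inr ⟨i, rfl⟩
  have hmem' : ∀ u, u ∈ Y → u ≠ y → u ∈ Z := fun u hu hne => hZ ▸ Or.inl ⟨hu, hne⟩
  let F : Y → W := fun u =>
    if h : u.val = y then contr (fun i => f ⟨desc y i, hmemd i⟩)
    else f ⟨u.val, hmem' u.val u.2 h⟩
  obtain ⟨H, ⟨Hhom, Hext⟩, Huniq⟩ := hY W F
  have hFy : F ⟨y, hyY⟩ = contr (fun i => f ⟨desc y i, hmemd i⟩) := dif_pos rfl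
  have hFu : ∀ (u : V) (hu : u ∈ Y) (hne : u ≠ y),
      F ⟨u, hu⟩ = f ⟨u, hmem' u hu hne⟩ := fun u hu hne => dif_neg hne
  have hext : ∀ z : Z, H z = f z := by
    rintro ⟨z, hz⟩
    rw [hZ] at hz
    rcases hz with hz | ⟨i, hi⟩
    · have h0 : H z = F ⟨z, hz.1⟩ := Hext ⟨z, hz.1⟩
      rw [h0, hFu z hz.1 hz.2]
    · simp only at hi
      subst hi
      have h1 : H (desc y i) = desc (H y) i := Hhom.1 y i
      have h2 : H y = F ⟨y, hyY⟩ := Hext ⟨y, hyY⟩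
      rw [h1, h2, hFy, desc_contr]
  refine ⟨H, ⟨Hhom, hext⟩, ?_⟩
  rintro G ⟨Ghom, Gext⟩
  refine Huniq G ⟨Ghom, ?_⟩
  rintro ⟨u, hu⟩
  by_cases hcase : u = y
  · subst hcase
    have h1 : G u = G (contr (fun i : Fin n => desc u i)) := by rw [contr_desc]
    rw [h1, Ghom.2]
    show contr (fun i : Fin n => G (desc u i)) = F ⟨u, hu⟩
    rw [hFy]
    congr 1
    funext i
    exact Gext ⟨desc u i, hmemd i⟩
  · have h0 : G u = f ⟨u, hmem' u hu hcase⟩ := Gext ⟨u, hmem' u hu hcase⟩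
    rw [h0, hFu u hu hcase]

lemma simpleExpansion_finite {Y Z : Set V} (h : SimpleExpansion n Y Z)
    (hY : Y.Finite) : Z.Finite := by
  obtain ⟨y, hyY, rfl⟩ := h
  exact ((hY.subset Set.diff_subset).union (Set.finite_range _))

lemma expansion_isBasis {Y Z : Set V} (h : Expansion n Y Z)
    (hY : IsBasis n Y) (hYf : Y.Finite) : IsBasis n Z ∧ Z.Finite := by
  induction h with
  | refl => exact ⟨hY, hYf⟩
  | tail _ hstep ih => exact ⟨simpleExpansion_isBasis hstep ih.1,
      simpleExpansion_finite hstep ih.2⟩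

end ExpBasis
section CAC

/-- Cardinality of a complete antichain in the `n`-ary tree is `≡ 1 mod (n-1)`. -/
lemma cac_card_aux {n : ℕ} (hn : 2 ≤ n) :
    ∀ (k : ℕ) (s : Finset (List (Fin n))),
      (∑ Γ ∈ s, Γ.length) ≤ k →
      (∀ Γ ∈ s, ∀ Δ : List (Fin n), Γ ++ Δ ∈ s → Δ = []) →
      (∃ M : ℕ, ∀ Δ : List (Fin n), Δ.length = M → ∃ Γ Θ, Δ = Γ ++ Θ ∧ Γ ∈ s) →
      s.card ≡ 1 [MOD n - 1] := by
  classical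
  intro k
  induction k using Nat.strong_induction_on with
  | _ k ih =>
    intro s hsum hpf hc
    obtain ⟨M, hM⟩ := hc
    have i0 : Fin n := ⟨0, by omega⟩
    -- s is nonempty
    have hne : s.Nonempty := by
      obtain ⟨Γ, Θ, _, hΓ⟩ := hM (List.replicate M i0) List.length_replicate
      exact ⟨Γ, hΓ⟩
    -- the ≥ version of completeness
    have hge : ∀ Δ : List (Fin n), M ≤ Δ.length → ∃ Γ Θ, Δ = Γ ++ Θ ∧ Γ ∈ s := by
      intro Δ hΔ
      obtain ⟨Γ, Θ, h1, h2⟩ := hM (Δ.take M) (by rw [List.length_take]; omega)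
      refine ⟨Γ, Θ ++ Δ.drop M, ?_, h2⟩
      rw [← List.append_assoc, ← h1, List.take_append_drop]
    by_cases hnil : ([] : List (Fin n)) ∈ s
    · have : s = {[]} := by
        apply Finset.eq_singleton_iff_unique_mem.mpr
        refine ⟨hnil, fun Γ hΓ => ?_⟩
        have := hpf [] hnil Γ (by simpa using hΓ)
        simp [this]
      rw [this]; simp [Nat.ModEq.refl]
    · -- pick an element of maximal length
      obtain ⟨Γmax, hΓmax, hLmax⟩ := Finset.exists_mem_eq_sup s hne (fun Γ => Γ.length)
      set L := s.sup (fun Γ : List (Fin n) => Γ.length) with hL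
      have hΓne : Γmax ≠ [] := fun h => hnil (h ▸ hΓmax)
      have hLpos : 1 ≤ L := by
        rw [hLmax]
        cases Γmax with
        | nil => exact absurd rfl hΓne
        | cons a l => simp
      obtain ⟨Δ₀, i, hΔ₀⟩ : ∃ (Δ₀ : List (Fin n)) (i : Fin n), Δ₀ ++ [i] = Γmax :=
        ⟨Γmax.dropLast, Γmax.getLast hΓne, List.dropLast_append_getLast hΓne⟩
      have hlenΔ₀ : Δ₀.length + 1 = L := by
        rw [hLmax, ← hΔ₀]; simp
      have hmaxlen : ∀ Γ ∈ s, Γ.length ≤ L := fun Γ hΓ =>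
        hL ▸ Finset.le_sup (f := fun Γ : List (Fin n) => Γ.length) hΓ
      have hΔ₀ns : Δ₀ ∉ s := by
        intro h
        have := hpf Δ₀ h [i] (by rw [hΔ₀]; exact hΓmax)
        simp at this
      -- all siblings `Δ₀ ++ [j]` belong to `s`
      have hsib : ∀ j : Fin n, Δ₀ ++ [j] ∈ s := by
        intro j
        obtain ⟨Γ', Θ, hsplit, hΓ's⟩ :=
          hge ((Δ₀ ++ [j]) ++ List.replicate M i0) (by simp; omega)
        have hp1 : Γ' <+: (Δ₀ ++ [j]) ++ List.replicate M i0 := ⟨Θ, hsplit.symm⟩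
        have hp2 : Δ₀ ++ [j] <+: (Δ₀ ++ [j]) ++ List.replicate M i0 :=
          ⟨List.replicate M i0, rfl⟩
        rcases List.prefix_or_prefix_of_prefix hp1 hp2 with hcase | hcase
        · -- Γ' is a prefix of Δ₀ ++ [j]
          have hp3 : Δ₀ <+: Δ₀ ++ [j] := ⟨[j], rfl⟩
          rcases List.prefix_or_prefix_of_prefix hcase hp3 with h4 | h4
          · -- Γ' prefix of Δ₀ : contradicts prefix-freeness via Γmax
            exfalso
            obtain ⟨Δ', hΔ'⟩ := h4
            have : Γ' ++ (Δ' ++ [i]) ∈ s := by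
              rw [← List.append_assoc, hΔ', hΔ₀]; exact hΓmax
            have := hpf Γ' hΓ's _ this
            simp at this
          · -- Δ₀ prefix of Γ' and Γ' prefix of Δ₀ ++ [j]
            have hlen1 : Γ'.length ≤ Δ₀.length + 1 := by
              have := hcase.length_le; simpa using this
            rcases Nat.lt_or_ge Γ'.length (Δ₀.length + 1) with h5 | h5
            · -- then Γ' = Δ₀, contradiction
              exfalso
              have h6 : Γ'.length ≤ Δ₀.length := by omega
              have h7 : Γ' = Δ₀ := by
                have := h4.length_le
                exact (h4.eq_of_length (by omega)).symm
              exact hΔ₀ns (h7 ▸ hΓ's)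
            · have : Γ' = Δ₀ ++ [j] := hcase.eq_of_length (by simp; omega)
              exact this ▸ hΓ's
        · -- Δ₀ ++ [j] prefix of Γ'; use maximality of L
          have : Γ' = Δ₀ ++ [j] := (hcase.eq_of_length (by
            have h1 := hmaxlen Γ' hΓ's
            have h2 := hcase.length_le
            simp only [List.length_append, List.length_singleton] at *
            omega)).symm
          exact this ▸ hΓ's
      -- contract the siblings
      set sib : Finset (List (Fin n)) := Finset.univ.image (fun j : Fin n => Δ₀ ++ [j]) with hsibdef
      have hsibsub : sib ⊆ s := by
        intro Γ hΓ
        rw [hsibdef] at hΓ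
        obtain ⟨j, _, rfl⟩ := Finset.mem_image.mp hΓ
        exact hsib j
      have hsibcard : sib.card = n := by
        rw [hsibdef, Finset.card_image_of_injective _ (fun a b hab => by
          simpa using List.append_cancel_left hab)]
        simp
      set s' : Finset (List (Fin n)) := insert Δ₀ (s \ sib) with hs'def
      have hΔ₀nsdiff : Δ₀ ∉ s \ sib := fun h => hΔ₀ns (Finset.mem_sdiff.mp h).1
      have hcard' : s'.card = s.card - n + 1 := by
        rw [hs'def, Finset.card_insert_of_notMem hΔ₀nsdiff, Finset.card_sdiff_of_subset hsibsub, hsibcard]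
      have hcardn : n ≤ s.card := by
        have := Finset.card_le_card hsibsub
        omega
      -- sum of lengths decreases
      have hlensib : ∀ Γ ∈ sib, Γ.length = L := by
        intro Γ hΓ
        rw [hsibdef] at hΓ
        obtain ⟨j, _, rfl⟩ := Finset.mem_image.mp hΓ
        simp only [List.length_append, List.length_singleton]
        omega
      have hsumsib : ∑ Γ ∈ sib, Γ.length = n * L := by
        rw [Finset.sum_congr rfl hlensib, Finset.sum_const, hsibcard, smul_eq_mul]
      have hsumsplit : ∑ Γ ∈ s \ sib, Γ.length + ∑ Γ ∈ sib, Γ.length = ∑ Γ ∈ s, Γ.length :=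
        Finset.sum_sdiff hsibsub
      have hsum' : ∑ Γ ∈ s', Γ.length = (∑ Γ ∈ s \ sib, Γ.length) + Δ₀.length := by
        rw [hs'def, Finset.sum_insert hΔ₀nsdiff]; omega
      have hmeas : ∑ Γ ∈ s', Γ.length < k := by
        have h2L : 2 * L ≤ n * L := Nat.mul_le_mul_right L hn
        omega
      -- prefix-freeness for s'
      have hpf' : ∀ Γ ∈ s', ∀ Δ : List (Fin n), Γ ++ Δ ∈ s' → Δ = [] := by
        intro Γ hΓ Δ hΓΔ
        rw [hs'def, Finset.mem_insert] at hΓ hΓΔ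
        rcases hΓ with rfl | hΓ
        · rcases hΓΔ with h1 | h1
          · have : Γ ++ Δ = Γ ++ [] := by rw [h1]; simp
            exact List.append_cancel_left this
          · cases Δ with
            | nil => rfl
            | cons j Δ' =>
              exfalso
              have h2 : (Γ ++ [j]) ++ Δ' ∈ s := by
                have := (Finset.mem_sdiff.mp h1).1
                simpa using this
              have := hpf (Γ ++ [j]) (hsib j) Δ' h2
              subst this
              exact (Finset.mem_sdiff.mp h1).2 (by rw [hsibdef]; simpa using ⟨j, rfl⟩)
        · have hΓs := (Finset.mem_sdiff.mp hΓ).1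
          rcases hΓΔ with h1 | h1
          · exfalso
            have h2 : Γ ++ (Δ ++ [i]) ∈ s := by
              rw [← List.append_assoc, h1, hΔ₀]; exact hΓmax
            have := hpf Γ hΓs _ h2
            simp at this
          · exact hpf Γ hΓs Δ (Finset.mem_sdiff.mp h1).1
      -- completeness for s'
      have hc' : ∃ M : ℕ, ∀ Δ : List (Fin n), Δ.length = M → ∃ Γ Θ, Δ = Γ ++ Θ ∧ Γ ∈ s' := by
        refine ⟨M, fun Δ hΔ => ?_⟩
        obtain ⟨Γ, Θ, h1, h2⟩ := hM Δ hΔ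
        by_cases hmem : Γ ∈ sib
        · rw [hsibdef] at hmem
          obtain ⟨j, _, rfl⟩ := Finset.mem_image.mp hmem
          refine ⟨Δ₀, [j] ++ Θ, ?_, ?_⟩
          · rw [h1]; simp
          · rw [hs'def]; exact Finset.mem_insert_self _ _
        · refine ⟨Γ, Θ, h1, ?_⟩
          rw [hs'def]
          exact Finset.mem_insert_of_mem (Finset.mem_sdiff.mpr ⟨h2, hmem⟩)
      have hrec := ih _ hmeas s' (le_refl _) hpf' hc'
      have : s.card = s'.card + (n - 1) := by omega
      rw [this]
      calc s'.card + (n-1) ≡ s'.card + 0 [MOD n-1] :=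
            Nat.ModEq.add_left _ (Nat.modEq_zero_iff_dvd.mpr dvd_rfl)
        _ = s'.card := by omega
        _ ≡ 1 [MOD n-1] := hrec

lemma cac_card {n : ℕ} (hn : 2 ≤ n) (s : Finset (List (Fin n)))
    (hpf : ∀ Γ ∈ s, ∀ Δ : List (Fin n), Γ ++ Δ ∈ s → Δ = [])
    (hc : ∃ M : ℕ, ∀ Δ : List (Fin n), Δ.length = M → ∃ Γ Θ, Δ = Γ ++ Θ ∧ Γ ∈ s) :
    s.card ≡ 1 [MOD n - 1] :=
  cac_card_aux hn _ s (le_refl _) hpf hc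

end CAC
section Orbits
variable {V : Type}

lemma orbitSize_exists (ψ : Equiv.Perm V) (hper : Periodic ψ) (v : V) :
    ∃ d, OrbitSize ψ v d := by
  classical
  have h : ∃ p, 0 < p ∧ (ψ ^ p) v = v := hper v
  refine ⟨Nat.find h, (Nat.find_spec h).1, (Nat.find_spec h).2, fun e he hlt hee => ?_⟩
  exact Nat.find_min h hlt ⟨he, hee⟩

lemma orbitSize_unique {ψ : Equiv.Perm V} {v : V} {d e : ℕ}
    (hd : OrbitSize ψ v d) (he : OrbitSize ψ v e) : d = e := by
  rcases Nat.lt_trichotomy d e with h | h | h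
  · exact absurd hd.2.1 (he.2.2 d hd.1 h)
  · exact h
  · exact absurd he.2.1 (hd.2.2 e he.1 h)

lemma pow_apply_comm (ψ : Equiv.Perm V) (j : ℕ) (v : V) :
    (ψ ^ j) (ψ v) = ψ ((ψ ^ j) v) := by
  have : ψ ^ j * ψ = ψ * ψ ^ j := (Commute.pow_self ψ j).symm.eq ▸ rfl
  calc (ψ ^ j) (ψ v) = (ψ ^ j * ψ) v := rfl
    _ = (ψ * ψ ^ j) v := by rw [(Commute.pow_self ψ j).eq]
    _ = ψ ((ψ ^ j) v) := rfl

lemma orbitSize_apply {ψ : Equiv.Perm V} {v : V} {d : ℕ} (h : OrbitSize ψ v d) :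
    OrbitSize ψ (ψ v) d := by
  refine ⟨h.1, ?_, ?_⟩
  · rw [pow_apply_comm, h.2.1]
  · intro e he hlt hee
    rw [pow_apply_comm] at hee
    exact h.2.2 e he hlt (ψ.injective hee)

lemma orbitSize_pow_apply {ψ : Equiv.Perm V} {v : V} {d : ℕ} (h : OrbitSize ψ v d) (j : ℕ) :
    OrbitSize ψ ((ψ ^ j) v) d := by
  induction j with
  | zero => simpa using h
  | succ j ih =>
      have : (ψ ^ (j+1)) v = ψ ((ψ ^ j) v) := by
        rw [pow_succ']; rfl
      rw [this]
      exact orbitSize_apply ih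

lemma pow_orbit_inj {ψ : Equiv.Perm V} {v : V} {d : ℕ} (h : OrbitSize ψ v d)
    {j k : ℕ} (hj : j < d) (hk : k < d) (hjk : (ψ ^ j) v = (ψ ^ k) v) : j = k := by
  rcases Nat.lt_trichotomy j k with hlt | heq | hgt
  · exfalso
    have h1 : (ψ ^ (k - j)) ((ψ ^ j) v) = (ψ ^ j) v := by
      have : ψ ^ (k - j) * ψ ^ j = ψ ^ k := by
        rw [← pow_add]; congr 1; omega
      calc (ψ ^ (k - j)) ((ψ ^ j) v) = (ψ ^ (k - j) * ψ ^ j) v := rfl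
        _ = (ψ ^ k) v := by rw [this]
        _ = (ψ ^ j) v := hjk.symm
    exact (orbitSize_pow_apply h j).2.2 (k - j) (by omega) (by omega) h1
  · exact heq
  · exfalso
    have h1 : (ψ ^ (j - k)) ((ψ ^ k) v) = (ψ ^ k) v := by
      have : ψ ^ (j - k) * ψ ^ k = ψ ^ j := by
        rw [← pow_add]; congr 1; omega
      calc (ψ ^ (j - k)) ((ψ ^ k) v) = (ψ ^ (j - k) * ψ ^ k) v := rfl
        _ = (ψ ^ j) v := by rw [this]
        _ = (ψ ^ k) v := hjk
    exact (orbitSize_pow_apply h k).2.2 (j - k) (by omega) (by omega) h1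

/-- Counting elements of an invariant finite set along orbits of size `d`,
weighted by an invariant function `g`. -/
lemma orbit_count {ψ : Equiv.Perm V} {d : ℕ} (hd : 0 < d) (g : V → ℕ) :
    ∀ (A : Finset V), (∀ x ∈ A, ψ x ∈ A) → (∀ x ∈ A, OrbitSize ψ x d) →
      (∀ x ∈ A, g (ψ x) = g x) →
      ∃ m c : ℕ, (∑ x ∈ A, g x) = d * m ∧ A.card = d * c ∧
        (∀ q : ℕ, (∀ x ∈ A, g x ≡ 1 [MOD q]) → m ≡ c [MOD q]) := by
  classical
  intro A
  induction A using Finset.strongInductionOn with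
  | _ A ih =>
    intro hinv hsz hg
    rcases A.eq_empty_or_nonempty with rfl | ⟨x₀, hx₀⟩
    · exact ⟨0, 0, by simp, by simp, fun q _ => Nat.ModEq.refl 0⟩
    · have hpowmem : ∀ j : ℕ, (ψ ^ j) x₀ ∈ A := by
        intro j
        induction j with
        | zero => simpa using hx₀
        | succ j ihj =>
            have : (ψ ^ (j+1)) x₀ = ψ ((ψ ^ j) x₀) := by rw [pow_succ']; rfl
            rw [this]; exact hinv _ ihj
      set O : Finset V := (Finset.range d).image (fun j => (ψ ^ j) x₀) with hOdef
      have hOsub : O ⊆ A := by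
        intro y hy
        obtain ⟨j, _, rfl⟩ := Finset.mem_image.mp hy
        exact hpowmem j
      have hOcard : O.card = d := by
        rw [hOdef, Finset.card_image_of_injOn, Finset.card_range]
        intro a ha b hb hab
        exact pow_orbit_inj (hsz x₀ hx₀) (Finset.mem_range.mp ha) (Finset.mem_range.mp hb) hab
      have hgpow : ∀ j : ℕ, g ((ψ ^ j) x₀) = g x₀ := by
        intro j
        induction j with
        | zero => simp
        | succ j ihj =>
            have h1 : (ψ ^ (j+1)) x₀ = ψ ((ψ ^ j) x₀) := by rw [pow_succ']; rfl
            rw [h1, hg _ (hpowmem j)]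
            exact ihj
      have hgO : ∀ y ∈ O, g y = g x₀ := by
        intro y hy
        obtain ⟨j, _, rfl⟩ := Finset.mem_image.mp hy
        exact hgpow j
      have hOne : O.Nonempty := ⟨x₀, by
        rw [hOdef]
        exact Finset.mem_image.mpr ⟨0, Finset.mem_range.mpr hd, by simp⟩⟩
      have hss : A \ O ⊂ A := by
        refine Finset.sdiff_ssubset ?_ hOne
        exact hOsub
      have hinv' : ∀ x ∈ A \ O, ψ x ∈ A \ O := by
        intro x hx
        obtain ⟨hxA, hxO⟩ := Finset.mem_sdiff.mp hx
        refine Finset.mem_sdiff.mpr ⟨hinv x hxA, ?_⟩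
        intro hmem
        obtain ⟨j, hj, hjeq⟩ := Finset.mem_image.mp (hOdef ▸ hmem)
        have hjlt : j < d := Finset.mem_range.mp hj
        apply hxO
        rcases Nat.eq_zero_or_pos j with rfl | hjpos
        · -- ψ x = x₀, so x = ψ^(d-1) x₀
          have h1 : (ψ ^ d) x₀ = x₀ := (hsz x₀ hx₀).2.1
          have h2 : ψ ((ψ ^ (d-1)) x₀) = x₀ := by
            have : ψ * ψ ^ (d - 1) = ψ ^ d := by
              rw [← pow_succ']; congr 1; omega
            calc ψ ((ψ ^ (d-1)) x₀) = (ψ * ψ ^ (d-1)) x₀ := rfl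
              _ = (ψ ^ d) x₀ := by rw [this]
              _ = x₀ := h1
          have hx0eq : x₀ = ψ x := by
            simpa using hjeq
          have : x = (ψ ^ (d-1)) x₀ := ψ.injective (by rw [← hx0eq, h2])
          rw [this, hOdef]
          exact Finset.mem_image.mpr ⟨d-1, Finset.mem_range.mpr (by omega), rfl⟩
        · have h2 : ψ ((ψ ^ (j-1)) x₀) = (ψ ^ j) x₀ := by
            have : ψ * ψ ^ (j - 1) = ψ ^ j := by
              rw [← pow_succ']; congr 1; omega
            calc ψ ((ψ ^ (j-1)) x₀) = (ψ * ψ ^ (j-1)) x₀ := rfl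
              _ = (ψ ^ j) x₀ := by rw [this]
          have : x = (ψ ^ (j-1)) x₀ := ψ.injective (by rw [h2, hjeq])
          rw [this, hOdef]
          exact Finset.mem_image.mpr ⟨j-1, Finset.mem_range.mpr (by omega), rfl⟩
      obtain ⟨m', c', hsum', hcard', hmod'⟩ := ih (A \ O) hss hinv'
        (fun x hx => hsz x (Finset.mem_sdiff.mp hx).1)
        (fun x hx => hg x (Finset.mem_sdiff.mp hx).1)
      refine ⟨g x₀ + m', 1 + c', ?_, ?_, ?_⟩
      · have h1 : ∑ x ∈ A \ O, g x + ∑ x ∈ O, g x = ∑ x ∈ A, g x := Finset.sum_sdiff hOsub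
        have h2 : ∑ x ∈ O, g x = d * g x₀ := by
          rw [Finset.sum_congr rfl hgO, Finset.sum_const, hOcard, smul_eq_mul]
        rw [← h1, h2, hsum']
        ring
      · have h1 : (A \ O).card + O.card = A.card := Finset.card_sdiff_add_card_eq_card hOsub
        rw [← h1, hOcard, hcard']
        ring
      · intro q hq
        exact Nat.ModEq.add (hq x₀ hx₀) (hmod' q (fun x hx => hq x (Finset.mem_sdiff.mp hx).1))

end Orbits
section AntiComp
variable {n : ℕ} {V : Type} [HigmanAlgebra n V]

lemma pow_mem_of_inv {φ : Equiv.Perm V} {Y : Set V} (hYinv : ∀ y, y ∈ Y ↔ φ y ∈ Y)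
    {y : V} (hy : y ∈ Y) (j : ℕ) : (φ ^ j) y ∈ Y := by
  induction j with
  | zero => simpa using hy
  | succ j ih =>
      have : (φ ^ (j+1)) y = φ ((φ ^ j) y) := by rw [pow_succ']; rfl
      rw [this]
      exact (hYinv _).mp ih

/-- If `y` lies in a basis, applying a word commutes with orbit sizes. -/
lemma orbitSize_applyWord_iff (hn : 2 ≤ n) {Y : Set V} (hYb : IsBasis n Y)
    {φ : Equiv.Perm V} (hφ : IsHom n ⇑φ) (hYinv : ∀ y, y ∈ Y ↔ φ y ∈ Y)
    {y : V} (hy : y ∈ Y) (Γ : List (Fin n)) (d : ℕ) :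
    OrbitSize φ (applyWord y Γ) d ↔ OrbitSize φ y d := by
  have key : ∀ e : ℕ, ((φ ^ e) (applyWord y Γ) = applyWord y Γ ↔ (φ ^ e) y = y) := by
    intro e
    rw [pow_applyWord hφ e y Γ]
    constructor
    · intro h
      exact ((basis_free hn hYb (pow_mem_of_inv hYinv hy e) hy h).1)
    · intro h; rw [h]
  constructor
  · rintro ⟨h1, h2, h3⟩
    exact ⟨h1, (key d).mp h2, fun e he hlt hee => h3 e he hlt ((key e).mpr hee)⟩
  · rintro ⟨h1, h2, h3⟩
    exact ⟨h1, (key d).mpr h2, fun e he hlt hee => h3 e he hlt ((key e).mp hee)⟩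

lemma anti_comp (hn : 2 ≤ n) {Y W : Set V} (hYb : IsBasis n Y) (hYf : Y.Finite)
    (hWf : W.Finite)
    {φ : Equiv.Perm V} (hφ : IsHom n ⇑φ) (hper : Periodic φ)
    (hYinv : ∀ y, y ∈ Y ↔ φ y ∈ Y) (hWinv : ∀ w, w ∈ W ↔ φ w ∈ W)
    (hWsub : W ⊆ wordClosure n Y)
    (hanti : ∀ y ∈ Y, ∀ Γ Δ : List (Fin n), applyWord y Γ ∈ W →
        applyWord y (Γ ++ Δ) ∈ W → Δ = [])
    (hcomp : ∀ y ∈ Y, ∃ M, ∀ Δ : List (Fin n), Δ.length = M →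
        ∃ Γ Θ, Δ = Γ ++ Θ ∧ applyWord y Γ ∈ W) :
    CycType φ W = CycType φ Y ∧ ∀ d, 0 < d → Mult φ W d ≡ Mult φ Y d [MOD n - 1] := by
  classical
  have hfree := fun {x x'} hx hx' {Γ Γ'} h => basis_free hn hYb (x := x) (x' := x') hx hx' (Γ := Γ) (Γ' := Γ') h
  -- the word sets
  set Cset : V → Set (List (Fin n)) := fun y => {Γ | applyWord y Γ ∈ W} with hCset
  have hCinj : ∀ y ∈ Y, Function.Injective (fun Γ : List (Fin n) => applyWord y Γ) := by
    intro y hy Γ Γ' h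
    exact (hfree hy hy h).2
  have hCfin : ∀ y ∈ Y, (Cset y).Finite := by
    intro y hy
    exact Set.Finite.preimage (Set.injOn_of_injective (hCinj y hy)) hWf
  -- Cset is nonempty on Y
  have hCne : ∀ y ∈ Y, (Cset y).Nonempty := by
    intro y hy
    obtain ⟨M, hM⟩ := hcomp y hy
    obtain ⟨Γ, Θ, _, hΓ⟩ := hM (List.replicate M ⟨0, by omega⟩) List.length_replicate
    exact ⟨Γ, hΓ⟩
  -- Cset is φ-invariant
  have hCinv : ∀ y : V, Cset (φ y) = Cset y := by
    intro y
    ext Γ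
    show applyWord (φ y) Γ ∈ W ↔ applyWord y Γ ∈ W
    rw [← hφ.applyWord y Γ]
    exact (hWinv _).symm
  -- Cset has ncard ≡ 1 mod n-1
  have hCcard : ∀ y ∈ Y, (Cset y).ncard ≡ 1 [MOD n - 1] := by
    intro y hy
    have h1 : (Cset y).ncard = (hCfin y hy).toFinset.card :=
      Set.ncard_eq_toFinset_card _ (hCfin y hy)
    rw [h1]
    apply cac_card hn
    · intro Γ hΓ Δ hΓΔ
      rw [Set.Finite.mem_toFinset] at hΓ hΓΔ
      exact hanti y hy Γ Δ hΓ hΓΔ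
    · obtain ⟨M, hM⟩ := hcomp y hy
      refine ⟨M, fun Δ hΔ => ?_⟩
      obtain ⟨Γ, Θ, h1, h2⟩ := hM Δ hΔ
      exact ⟨Γ, Θ, h1, (Set.Finite.mem_toFinset _).mpr h2⟩
  -- every element of W is y Γ with Γ ∈ Cset y
  have hWrep : ∀ w ∈ W, ∃ y ∈ Y, ∃ Γ, Γ ∈ Cset y ∧ w = applyWord y Γ := by
    intro w hw
    obtain ⟨y, hy, Γ, rfl⟩ := hWsub hw
    exact ⟨y, hy, Γ, hw, rfl⟩
  constructor
  · -- cycle types are equal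
    ext d
    simp only [CycType, Set.mem_setOf_eq]
    constructor
    · rintro ⟨w, hw, hsz⟩
      obtain ⟨y, hy, Γ, hΓ, rfl⟩ := hWrep w hw
      exact ⟨y, hy, (orbitSize_applyWord_iff hn hYb hφ hYinv hy Γ d).mp hsz⟩
    · rintro ⟨y, hy, hsz⟩
      obtain ⟨Γ, hΓ⟩ := hCne y hy
      exact ⟨applyWord y Γ, hΓ, (orbitSize_applyWord_iff hn hYb hφ hYinv hy Γ d).mpr hsz⟩
  · -- multiplicities
    intro d hd
    set A : Set V := {y ∈ Y | OrbitSize φ y d} with hA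
    have hAfin : A.Finite := hYf.subset (fun x hx => hx.1)
    set FA : Finset V := hAfin.toFinset with hFA
    set Wd : Set V := {w ∈ W | OrbitSize φ w d} with hWd
    have hWdfin : Wd.Finite := hWf.subset (fun x hx => hx.1)
    set FWd : Finset V := hWdfin.toFinset with hFWd
    have hmemFA : ∀ y, y ∈ FA ↔ (y ∈ Y ∧ OrbitSize φ y d) := by
      intro y; rw [hFA, Set.Finite.mem_toFinset]; rfl
    -- FWd as a biUnion
    have hbij : FWd = FA.biUnion (fun y =>
        if hy : y ∈ Y then ((hCfin y hy).toFinset.image (fun Γ => applyWord y Γ)) else ∅) := by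
      ext w
      rw [hFWd, Set.Finite.mem_toFinset, Finset.mem_biUnion]
      constructor
      · rintro ⟨hw, hsz⟩
        obtain ⟨y, hy, Γ, hΓ, rfl⟩ := hWrep w hw
        refine ⟨y, (hmemFA y).mpr ⟨hy, (orbitSize_applyWord_iff hn hYb hφ hYinv hy Γ d).mp hsz⟩, ?_⟩
        rw [dif_pos hy]
        exact Finset.mem_image.mpr ⟨Γ, (Set.Finite.mem_toFinset _).mpr hΓ, rfl⟩
      · rintro ⟨y, hyFA, hmem⟩
        obtain ⟨hy, hsz⟩ := (hmemFA y).mp hyFA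
        rw [dif_pos hy] at hmem
        obtain ⟨Γ, hΓ, rfl⟩ := Finset.mem_image.mp hmem
        rw [Set.Finite.mem_toFinset] at hΓ
        exact ⟨hΓ, (orbitSize_applyWord_iff hn hYb hφ hYinv hy Γ d).mpr hsz⟩
    have hdisj : ∀ y ∈ FA, ∀ y' ∈ FA, y ≠ y' →
        Disjoint (if hy : y ∈ Y then ((hCfin y hy).toFinset.image (fun Γ => applyWord y Γ)) else ∅)
          (if hy : y' ∈ Y then ((hCfin y' hy).toFinset.image (fun Γ => applyWord y' Γ)) else ∅) := by
      intro y hy y' hy' hne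
      obtain ⟨hyY, _⟩ := (hmemFA y).mp hy
      obtain ⟨hy'Y, _⟩ := (hmemFA y').mp hy'
      rw [dif_pos hyY, dif_pos hy'Y]
      rw [Finset.disjoint_left]
      intro a ha ha'
      obtain ⟨Γ, _, rfl⟩ := Finset.mem_image.mp ha
      obtain ⟨Γ', _, heq⟩ := Finset.mem_image.mp ha'
      exact hne ((hfree hyY hy'Y heq.symm).1)
    have hcard : FWd.card = ∑ y ∈ FA, (Cset y).ncard := by
      rw [hbij, Finset.card_biUnion hdisj]
      apply Finset.sum_congr rfl
      intro y hy
      obtain ⟨hyY, _⟩ := (hmemFA y).mp hy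
      rw [dif_pos hyY, Finset.card_image_of_injective _ (hCinj y hyY),
        Set.ncard_eq_toFinset_card _ (hCfin y hyY)]
    -- apply the orbit counting lemma
    obtain ⟨m, c, hsum, hcardA, hmod⟩ := orbit_count hd (fun y => (Cset y).ncard) FA
      (by
        intro x hx
        obtain ⟨hxY, hxsz⟩ := (hmemFA x).mp hx
        exact (hmemFA _).mpr ⟨(hYinv x).mp hxY, orbitSize_apply hxsz⟩)
      (fun x hx => ((hmemFA x).mp hx).2)
      (fun x hx => by
        show (Cset (φ x)).ncard = (Cset x).ncard
        rw [hCinv x])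
    have hMW : Mult φ W d = m := by
      have h1 : Wd.ncard = FWd.card := Set.ncard_eq_toFinset_card _ hWdfin
      show Wd.ncard / d = m
      rw [h1, hcard, hsum, Nat.mul_div_cancel_left _ hd]
    have hMY : Mult φ Y d = c := by
      have h1 : A.ncard = FA.card := Set.ncard_eq_toFinset_card _ hAfin
      show A.ncard / d = c
      rw [h1, hcardA, Nat.mul_div_cancel_left _ hd]
    rw [hMW, hMY]
    exact hmod (n-1) (fun x hx => hCcard x ((hmemFA x).mp hx).1)

end AntiComp
section SNF
variable {n : ℕ} {V : Type} [HigmanAlgebra n V]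

lemma wc_invariant {X : Set V} {ψ : Equiv.Perm V} (hsnf : SemiNormal n ψ X)
    (hper : Periodic ψ) {y : V} (hy : y ∈ wordClosure n X) (k : ℤ) :
    (ψ ^ k) y ∈ wordClosure n X := by
  classical
  by_contra hbad
  obtain ⟨p, hppos, hp⟩ := hper y
  have hpz : ∀ i : ℤ, (ψ ^ (i + (p:ℤ))) y = (ψ ^ i) y := by
    intro i
    rw [zpow_add]
    show (ψ ^ i) ((ψ ^ (p:ℤ)) y) = _
    rw [zpow_natCast, hp]
  have hpz' : ∀ i : ℤ, (ψ ^ (i - (p:ℤ))) y = (ψ ^ i) y := by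
    intro i
    have := hpz (i - p)
    simpa using this.symm
  have hup : ∀ (t : ℕ) (i : ℤ), (ψ ^ (i + (t:ℤ) * p)) y = (ψ ^ i) y := by
    intro t
    induction t with
    | zero => intro i; simp
    | succ t ih =>
        intro i
        have h1 : i + ((t:ℤ)+1) * p = (i + t * p) + p := by ring
        rw [show ((t+1:ℕ):ℤ) = (t:ℤ)+1 by push_cast; ring, h1, hpz, ih]
  have hdn : ∀ (t : ℕ) (i : ℤ), (ψ ^ (i - (t:ℤ) * p)) y = (ψ ^ i) y := by
    intro t
    induction t with
    | zero => intro i; simp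
    | succ t ih =>
        intro i
        have h1 : i - ((t:ℤ)+1) * p = (i - t * p) - p := by ring
        rw [show ((t+1:ℕ):ℤ) = (t:ℤ)+1 by push_cast; ring, h1, hpz', ih]
  -- positive and negative bad exponents
  have hposbad : ∃ m : ℕ, (ψ ^ ((m:ℤ) + 1)) y ∉ wordClosure n X := by
    set t : ℕ := (1 - k).toNat with ht
    have h1 : k + (t:ℤ) * p ≥ 1 := by
      have h2 : (t:ℤ) ≥ 1 - k := by
        rw [ht]; exact Int.self_le_toNat _
      have h3 : (t:ℤ) * p ≥ (t:ℤ) * 1 := by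
        rcases Nat.eq_zero_or_pos t with h | h
        · simp [h]
        · exact mul_le_mul_of_nonneg_left (by exact_mod_cast hppos) (by positivity)
      omega
    refine ⟨(k + (t:ℤ) * p - 1).toNat, ?_⟩
    have h4 : ((k + (t:ℤ) * p - 1).toNat : ℤ) + 1 = k + (t:ℤ) * p := by omega
    rw [h4, hup t k]
    exact hbad
  have hnegbad : ∃ m : ℕ, (ψ ^ (-(m:ℤ) - 1)) y ∉ wordClosure n X := by
    set t : ℕ := (k + 1).toNat with ht
    have h1 : k - (t:ℤ) * p ≤ -1 := by
      have h2 : (t:ℤ) ≥ k + 1 := by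
        rw [ht]; exact Int.self_le_toNat _
      have h3 : (t:ℤ) * p ≥ (t:ℤ) * 1 := by
        rcases Nat.eq_zero_or_pos t with h | h
        · simp [h]
        · exact mul_le_mul_of_nonneg_left (by exact_mod_cast hppos) (by positivity)
      omega
    refine ⟨(-(k - (t:ℤ) * p) - 1).toNat, ?_⟩
    have h4 : -((-(k - (t:ℤ) * p) - 1).toNat : ℤ) - 1 = k - (t:ℤ) * p := by omega
    rw [h4, hdn t k]
    exact hbad
  set bf : ℕ := Nat.find hposbad with hbf
  set af : ℕ := Nat.find hnegbad with haf
  apply hsnf y hy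
  refine ⟨-(af:ℤ), (bf:ℤ), by omega, by omega, ?_, ?_, ?_⟩
  · intro i h1 h2
    rcases Int.lt_trichotomy i 0 with hi | hi | hi
    · have hlt : (-i - 1).toNat < af := by omega
      have := Nat.find_min hnegbad hlt
      rw [not_not] at this
      have heq : -(((-i - 1).toNat:ℤ)) - 1 = i := by omega
      rwa [heq] at this
    · subst hi; simpa using hy
    · have hlt : (i - 1).toNat < bf := by omega
      have := Nat.find_min hposbad hlt
      rw [not_not] at this
      have heq : (((i - 1).toNat:ℤ)) + 1 = i := by omega
      rwa [heq] at this
  · have := Nat.find_spec hnegbad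
    rwa [show -(af:ℤ) - 1 = -(af:ℤ) - 1 from rfl]
  · exact Nat.find_spec hposbad

/-- A periodic automorphism in semi-normal form maps its basis into itself. -/
lemma snf_maps_basis (hn : 2 ≤ n) {X : Set V} (hXb : IsBasis n X)
    {ψ : Equiv.Perm V} (hψ : IsHom n ⇑ψ) (hper : Periodic ψ) (hsnf : SemiNormal n ψ X) :
    ∀ x ∈ X, ψ x ∈ X := by
  classical
  intro x hx
  -- ψ maps X into the word closure
  have hstep : ∀ t : X, ∃ (t' : X) (L : List (Fin n)), ψ t.val = applyWord t'.val L := by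
    intro t
    have h1 : (ψ ^ (1:ℤ)) t.val ∈ wordClosure n X :=
      wc_invariant hsnf hper (mem_wordClosure_self t.2) 1
    rw [zpow_one] at h1
    obtain ⟨x', hx', Γ, hΓ⟩ := h1
    exact ⟨⟨x', hx'⟩, Γ, hΓ⟩
  choose σ w hσw using hstep
  -- iterating
  have hiter : ∀ (k : ℕ) (t : X), ∃ (t' : X) (L : List (Fin n)),
      (ψ ^ (k+1)) t.val = applyWord t'.val (L ++ w t) := by
    intro k
    induction k with
    | zero =>
        intro t
        refine ⟨σ t, [], ?_⟩
        simpa using hσw t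
    | succ k ih =>
        intro t
        obtain ⟨t', L, hL⟩ := ih (σ t)
        refine ⟨t', L ++ w (σ t), ?_⟩
        have h1 : (ψ ^ (k+2)) t.val = (ψ ^ (k+1)) (ψ t.val) := by
          rw [pow_succ]; rfl
        rw [h1, hσw t, pow_applyWord hψ, hL, ← applyWord_append, List.append_assoc]
  obtain ⟨p, hppos, hp⟩ := hper x
  obtain ⟨t', L, hL⟩ := hiter (p - 1) ⟨x, hx⟩
  rw [show p - 1 + 1 = p by omega, hp] at hL
  have h2 : applyWord x ([] : List (Fin n)) = applyWord t'.val (L ++ w ⟨x, hx⟩) := by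
    rw [applyWord_nil]; exact hL
  have h3 := basis_free hn hXb hx t'.2 h2
  have h4 : w ⟨x, hx⟩ = [] := by
    have := h3.2.symm
    exact (List.append_eq_nil_iff.mp this).2
  have h5 := hσw ⟨x, hx⟩
  rw [h4, applyWord_nil] at h5
  rw [h5]
  exact (σ ⟨x, hx⟩).2

/-- Upgrade a self-map on a finite set to an invariance `iff`. -/
lemma maps_to_iff_of_finite {X : Set V} (hXf : X.Finite) {ψ : Equiv.Perm V}
    (hmaps : ∀ x ∈ X, ψ x ∈ X) : ∀ x, x ∈ X ↔ ψ x ∈ X := by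
  have himg : ψ '' X = X := by
    apply Set.eq_of_subset_of_ncard_le
    · rintro _ ⟨x, hx, rfl⟩; exact hmaps x hx
    · rw [Set.ncard_image_of_injective _ ψ.injective]
    · exact hXf
  intro x
  constructor
  · intro hx; exact hmaps x hx
  · intro hx
    rw [← himg] at hx
    obtain ⟨x', hx', heq⟩ := hx
    rwa [← ψ.injective heq]

end SNF
section Comp
variable {n : ℕ} {V : Type} [HigmanAlgebra n V]

lemma isBasis_image {ρ : Equiv.Perm V} (hρ : IsHom n ⇑ρ) {X : Set V} (hX : IsBasis n X) :
    IsBasis n (ρ '' X) := by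
  intro W _ f
  obtain ⟨h, ⟨hhom, hext⟩, huniq⟩ := hX W (fun x => f ⟨ρ x, ⟨x.val, x.2, rfl⟩⟩)
  refine ⟨h ∘ ρ.symm, ⟨hρ.symm.comp hhom, ?_⟩, ?_⟩
  · rintro ⟨z, hz⟩
    obtain ⟨x, hx, rfl⟩ := hz
    show h (ρ.symm (ρ x)) = _
    rw [Equiv.symm_apply_apply]
    exact hext ⟨x, hx⟩
  · rintro G ⟨Ghom, Gext⟩
    have h1 : (G ∘ ⇑ρ) = h := by
      apply huniq
      refine ⟨hρ.comp Ghom, ?_⟩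
      intro x
      exact Gext ⟨ρ x, ⟨x.val, x.2, rfl⟩⟩
    funext v
    show G v = h (ρ.symm v)
    rw [← h1]
    show G v = G (ρ (ρ.symm v))
    rw [Equiv.apply_symm_apply]

/-- Comparison of cycle data across two invariant finite bases. -/
lemma comp_bases (hn : 2 ≤ n) {Y Z : Set V} (hYb : IsBasis n Y) (hYf : Y.Finite)
    (hZb : IsBasis n Z) (hZf : Z.Finite)
    {φ : Equiv.Perm V} (hφ : IsHom n ⇑φ) (hper : Periodic φ)
    (hYinv : ∀ y, y ∈ Y ↔ φ y ∈ Y) (hZinv : ∀ z, z ∈ Z ↔ φ z ∈ Z) :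
    CycType φ Y = CycType φ Z ∧ ∀ d, 0 < d → Mult φ Y d ≡ Mult φ Z d [MOD n - 1] := by
  classical
  choose NfY hNfY using (basis_descend hYb)
  choose NfZ hNfZ using (basis_descend hZb)
  set N : ℕ := hZf.toFinset.sup NfY with hN
  have hNle : ∀ z ∈ Z, NfY z ≤ N :=
    fun z hz => Finset.le_sup (f := NfY) (hZf.mem_toFinset.mpr hz)
  set ZN : Set V := {v | ∃ z ∈ Z, ∃ Γ : List (Fin n), Γ.length = N ∧ v = applyWord z Γ}
    with hZN
  have hfreeY := fun {x x'} hx hx' {Γ Γ'} h =>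
    basis_free hn hYb (x := x) (x' := x') hx hx' (Γ := Γ) (Γ' := Γ') h
  have hfreeZ := fun {x x'} hx hx' {Γ Γ'} h =>
    basis_free hn hZb (x := x) (x' := x') hx hx' (Γ := Γ) (Γ' := Γ') h
  have hZNsubY : ZN ⊆ wordClosure n Y := by
    rintro v ⟨z, hz, Γ, hΓlen, rfl⟩
    exact hNfY z Γ (by rw [hΓlen]; exact hNle z hz)
  have hZNsubZ : ZN ⊆ wordClosure n Z := by
    rintro v ⟨z, hz, Γ, hΓlen, rfl⟩
    exact ⟨z, hz, Γ, rfl⟩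
  have hZNfin : ZN.Finite := by
    have h1 : ZN ⊆ (fun p : V × List (Fin n) => applyWord p.1 p.2) ''
        (Z ×ˢ {Γ : List (Fin n) | Γ.length = N}) := by
      rintro v ⟨z, hz, Γ, hΓlen, rfl⟩
      exact ⟨(z, Γ), ⟨hz, hΓlen⟩, rfl⟩
    exact Set.Finite.subset (Set.Finite.image _ (hZf.prod (List.finite_length_eq _ N))) h1
  have hZNinv : ∀ w, w ∈ ZN ↔ φ w ∈ ZN := by
    intro w
    constructor
    · rintro ⟨z, hz, Γ, hΓlen, rfl⟩
      exact ⟨φ z, (hZinv z).mp hz, Γ, hΓlen, hφ.applyWord z Γ⟩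
    · rintro ⟨z, hz, Γ, hΓlen, heq⟩
      have hz' : φ.symm z ∈ Z := by
        have := hZinv (φ.symm z)
        simp only [Equiv.apply_symm_apply] at this
        exact this.mpr hz
      refine ⟨φ.symm z, hz', Γ, hΓlen, ?_⟩
      apply φ.injective
      rw [heq, hφ.applyWord, Equiv.apply_symm_apply]
  -- membership in ZN pins down the length
  have hZNlen : ∀ z ∈ Z, ∀ Γ : List (Fin n), applyWord z Γ ∈ ZN → Γ.length = N := by
    intro z hz Γ hmem
    obtain ⟨z', hz', Γ', hΓ'len, heq⟩ := hmem
    obtain ⟨hzz, hΓΓ⟩ := hfreeZ hz hz' heq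
    rw [hΓΓ, hΓ'len]
  -- anti_comp for base Z
  have hAC1 := anti_comp hn hZb hZf hZNfin hφ hper hZinv hZNinv hZNsubZ
    (by
      intro z hz Γ Δ h1 h2
      have l1 := hZNlen z hz Γ h1
      have l2 := hZNlen z hz (Γ ++ Δ) h2
      rw [List.length_append, l1] at l2
      simpa using l2.symm)
    (by
      intro z hz
      exact ⟨N, fun Δ hΔ => ⟨Δ, [], by simp, ⟨z, hz, Δ, hΔ, rfl⟩⟩⟩)
  -- anti_comp for base Y
  have hAC2 := anti_comp hn hYb hYf hZNfin hφ hper hYinv hZNinv hZNsubY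
    (by
      intro y hy Γ Δ h1 h2
      obtain ⟨z1, hz1, Θ1, hΘ1len, he1⟩ := h1
      obtain ⟨z2, hz2, Θ2, hΘ2len, he2⟩ := h2
      have he3 : applyWord z1 (Θ1 ++ Δ) = applyWord z2 Θ2 := by
        rw [applyWord_append, ← he1, ← applyWord_append, ← he2]
      obtain ⟨hz12, hΘ12⟩ := hfreeZ hz1 hz2 he3
      have : Θ1.length + Δ.length = Θ2.length := by
        rw [← List.length_append, hΘ12]
      rw [hΘ1len, hΘ2len] at this
      simpa using this)
    (by
      intro y hy
      refine ⟨NfZ y + N, fun Δ hΔ => ?_⟩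
      have hsplit : Δ = Δ.take (NfZ y) ++ Δ.drop (NfZ y) := (List.take_append_drop _ _).symm
      have hlen1 : (Δ.take (NfZ y)).length = NfZ y := by
        rw [List.length_take]; omega
      have h1 : applyWord y (Δ.take (NfZ y)) ∈ wordClosure n Z :=
        hNfZ y _ (by omega)
      obtain ⟨z, hz, Θ, hΘ⟩ := h1
      have h2 : applyWord y Δ = applyWord z (Θ ++ Δ.drop (NfZ y)) := by
        conv_lhs => rw [hsplit]
        rw [applyWord_append, hΘ, applyWord_append]
      have hlen2 : N ≤ (Θ ++ Δ.drop (NfZ y)).length := by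
        rw [List.length_append, List.length_drop]
        omega
      set S1 := (Θ ++ Δ.drop (NfZ y)).take N with hS1
      set S2 := (Θ ++ Δ.drop (NfZ y)).drop N with hS2
      have hS1len : S1.length = N := by rw [hS1, List.length_take]; omega
      have hmemZN : applyWord z S1 ∈ ZN := ⟨z, hz, S1, hS1len, rfl⟩
      obtain ⟨y', hy', Γ', hΓ'⟩ := hZNsubY hmemZN
      have h3 : applyWord y Δ = applyWord y' (Γ' ++ S2) := by
        calc applyWord y Δ = applyWord z (Θ ++ List.drop (NfZ y) Δ) := h2
          _ = applyWord z (S1 ++ S2) := by rw [hS1, hS2, List.take_append_drop]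
          _ = applyWord (applyWord z S1) S2 := applyWord_append _ _ _
          _ = applyWord (applyWord y' Γ') S2 := by rw [hΓ']
          _ = applyWord y' (Γ' ++ S2) := (applyWord_append _ _ _).symm
      obtain ⟨hyy, hΔeq⟩ := hfreeY hy hy' h3
      subst hyy
      exact ⟨Γ', S2, hΔeq, by rw [← hΓ']; exact hmemZN⟩)
  refine ⟨hAC2.1.symm.trans hAC1.1, fun d hd => ?_⟩
  exact (Nat.ModEq.symm (hAC2.2 d hd)).trans (hAC1.2 d hd)

end Comp
section Forward
variable {n : ℕ} {V : Type} [HigmanAlgebra n V]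

lemma conj_pow_apply {ψ φ ρ : Equiv.Perm V} (hconj : ∀ v, ρ (ψ v) = φ (ρ v)) :
    ∀ (e : ℕ) (v : V), (φ ^ e) (ρ v) = ρ ((ψ ^ e) v) := by
  intro e
  induction e with
  | zero => intro v; simp
  | succ e ih =>
      intro v
      have h1 : (φ ^ (e+1)) (ρ v) = (φ ^ e) (φ (ρ v)) := by rw [pow_succ]; rfl
      have h2 : (ψ ^ (e+1)) v = (ψ ^ e) (ψ v) := by rw [pow_succ]; rfl
      rw [h1, h2, ← hconj v, ih]

lemma forward_dir (hn : 2 ≤ n) {Xψ Xφ : Set V} (hXψb : IsBasis n Xψ) (hXψf : Xψ.Finite)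
    (hXφb : IsBasis n Xφ) (hXφf : Xφ.Finite)
    {ψ φ : Equiv.Perm V} (hψ : IsHom n ⇑ψ) (hφ : IsHom n ⇑φ)
    (hperψ : Periodic ψ) (hperφ : Periodic φ)
    (hψinv : ∀ x, x ∈ Xψ ↔ ψ x ∈ Xψ) (hφinv : ∀ x, x ∈ Xφ ↔ φ x ∈ Xφ)
    (ρ : Equiv.Perm V) (hρ : IsHom n ⇑ρ) (hconj : ∀ v, ρ (ψ v) = φ (ρ v)) :
    CycType ψ Xψ = CycType φ Xφ ∧
      ∀ d, 0 < d → Mult ψ Xψ d ≡ Mult φ Xφ d [MOD n - 1] := by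
  set Y : Set V := ρ '' Xψ with hY
  have hYb : IsBasis n Y := isBasis_image hρ hXψb
  have hYf : Y.Finite := hXψf.image _
  have hYmaps : ∀ u ∈ Y, φ u ∈ Y := by
    rintro u ⟨x, hx, rfl⟩
    rw [← hconj x]
    exact ⟨ψ x, (hψinv x).mp hx, rfl⟩
  have hYinv : ∀ u, u ∈ Y ↔ φ u ∈ Y := maps_to_iff_of_finite hYf hYmaps
  have hszeq : ∀ (x : V) (d : ℕ), OrbitSize φ (ρ x) d ↔ OrbitSize ψ x d := by
    intro x d
    have key : ∀ e : ℕ, ((φ ^ e) (ρ x) = ρ x ↔ (ψ ^ e) x = x) := by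
      intro e
      rw [conj_pow_apply hconj e x]
      exact ⟨fun h => ρ.injective h, fun h => by rw [h]⟩
    constructor
    · rintro ⟨h1, h2, h3⟩
      exact ⟨h1, (key d).mp h2, fun e he hlt hee => h3 e he hlt ((key e).mpr hee)⟩
    · rintro ⟨h1, h2, h3⟩
      exact ⟨h1, (key d).mpr h2, fun e he hlt hee => h3 e he hlt ((key e).mp hee)⟩
  have hCT : CycType φ Y = CycType ψ Xψ := by
    ext d
    constructor
    · rintro ⟨u, ⟨x, hx, rfl⟩, hsz⟩
      exact ⟨x, hx, (hszeq x d).mp hsz⟩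
    · rintro ⟨x, hx, hsz⟩
      exact ⟨ρ x, ⟨x, hx, rfl⟩, (hszeq x d).mpr hsz⟩
  have hMT : ∀ d, Mult φ Y d = Mult ψ Xψ d := by
    intro d
    have hseteq : {u ∈ Y | OrbitSize φ u d} = ρ '' {x ∈ Xψ | OrbitSize ψ x d} := by
      ext u
      constructor
      · rintro ⟨⟨x, hx, rfl⟩, hsz⟩
        exact ⟨x, ⟨hx, (hszeq x d).mp hsz⟩, rfl⟩
      · rintro ⟨x, ⟨hx, hsz⟩, rfl⟩
        exact ⟨⟨x, hx, rfl⟩, (hszeq x d).mpr hsz⟩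
    show ({u ∈ Y | OrbitSize φ u d}).ncard / d = _
    rw [hseteq, Set.ncard_image_of_injective _ ρ.injective]
    rfl
  obtain ⟨hCT2, hMT2⟩ := comp_bases hn hYb hYf hXφb hXφf hφ hperφ hYinv hφinv
  refine ⟨hCT.symm.trans hCT2, fun d hd => ?_⟩
  have := hMT2 d hd
  rw [hMT d] at this
  exact this

end Forward
section Expand
variable {n : ℕ} {V : Type} [HigmanAlgebra n V]

/-- The set of all immediate descendants of elements of `F`. -/
def descSet (n : ℕ) {V : Type} [HigmanAlgebra n V] (F : Set V) : Set V :=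
  {v | ∃ u ∈ F, ∃ i : Fin n, v = desc u i}

lemma expand_finset (hn : 2 ≤ n) {S : Set V} (hSb : IsBasis n S) (hSf : S.Finite)
    (F : Finset V) (hF : ↑F ⊆ S) :
    IsBasis n ((S \ ↑F) ∪ descSet n (↑F : Set V)) ∧
      ((S \ ↑F) ∪ descSet n (↑F : Set V)).Finite := by
  classical
  induction F using Finset.induction_on with
  | empty =>
      have : (S \ ↑(∅ : Finset V)) ∪ descSet n (↑(∅ : Finset V) : Set V) = S := by
        ext v
        simp [descSet]
      rw [this]
      exact ⟨hSb, hSf⟩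
  | insert y F' hynotF ih =>
      have hF' : ↑F' ⊆ S := by
        intro v hv
        exact hF (by simp [hv])
      have hyS : y ∈ S := hF (by simp)
      obtain ⟨ihb, ihf⟩ := ih hF'
      have hynotDD : y ∉ descSet n (↑F' : Set V) := by
        rintro ⟨u, hu, i, hui⟩
        have h1 : applyWord y ([] : List (Fin n)) = applyWord u [i] := by
          simpa [applyWord] using hui
        have := (basis_free hn hSb hyS (hF' hu) h1).2
        simp at this
      have hstep : SimpleExpansion n ((S \ ↑F') ∪ descSet n (↑F' : Set V))
          ((S \ ↑(insert y F')) ∪ descSet n (↑(insert y F') : Set V)) := by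
        refine ⟨y, Or.inl ⟨hyS, by simpa using hynotF⟩, ?_⟩
        ext v
        simp only [Set.mem_union, Set.mem_diff, Set.mem_singleton_iff, Finset.coe_insert,
          Set.mem_insert_iff, Set.mem_range, descSet, Set.mem_setOf_eq, Finset.mem_coe]
        constructor
        · rintro (⟨hvS, hv⟩ | ⟨u, hu, i, rfl⟩)
          · push_neg at hv
            exact Or.inl ⟨Or.inl ⟨hvS, hv.2⟩, hv.1⟩
          · rcases hu with rfl | hu
            · exact Or.inr ⟨i, rfl⟩
            · refine Or.inl ⟨Or.inr ⟨u, hu, i, rfl⟩, ?_⟩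
              rintro rfl
              exact hynotDD ⟨u, hu, i, rfl⟩
        · rintro (⟨(⟨hvS, hv⟩ | ⟨u, hu, i, rfl⟩), hvy⟩ | ⟨i, hi⟩)
          · exact Or.inl ⟨hvS, by push_neg; exact ⟨hvy, hv⟩⟩
          · exact Or.inr ⟨u, Or.inr hu, i, rfl⟩
          · exact Or.inr ⟨y, Or.inl rfl, i, hi.symm⟩
      exact ⟨simpleExpansion_isBasis hstep ihb, simpleExpansion_finite hstep ihf⟩

end Expand
section OrbitExpand
variable {n : ℕ} {V : Type} [HigmanAlgebra n V]

lemma orbit_expand (hn : 2 ≤ n) {S : Set V} (hSb : IsBasis n S) (hSf : S.Finite)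
    {ψ : Equiv.Perm V} (hψ : IsHom n ⇑ψ) (hSinv : ∀ x, x ∈ S ↔ ψ x ∈ S)
    {x₀ : V} (hx₀ : x₀ ∈ S) {d : ℕ} (hx₀d : OrbitSize ψ x₀ d) :
    ∃ S' : Set V, IsBasis n S' ∧ S'.Finite ∧ (∀ x, x ∈ S' ↔ ψ x ∈ S') ∧
      CycType ψ S' = CycType ψ S ∧
      Mult ψ S' d = Mult ψ S d + (n - 1) ∧
      (∀ e, e ≠ d → Mult ψ S' e = Mult ψ S e) := by
  classical
  have hd : 0 < d := hx₀d.1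
  have hfree := fun {x x'} hx hx' {Γ Γ'} h =>
    basis_free hn hSb (x := x) (x' := x') hx hx' (Γ := Γ) (Γ' := Γ') h
  have hpowmem : ∀ j : ℕ, (ψ ^ j) x₀ ∈ S := fun j => pow_mem_of_inv hSinv hx₀ j
  set FO : Finset V := (Finset.range d).image (fun j => (ψ ^ j) x₀) with hFO
  have hFOsub : ↑FO ⊆ S := by
    intro v hv
    obtain ⟨j, _, rfl⟩ := Finset.mem_image.mp hv
    exact hpowmem j
  have hFOcard : FO.card = d := by
    rw [hFO, Finset.card_image_of_injOn, Finset.card_range]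
    intro a ha b hb hab
    exact pow_orbit_inj hx₀d (Finset.mem_range.mp ha) (Finset.mem_range.mp hb) hab
  have hFOsz : ∀ y ∈ FO, OrbitSize ψ y d := by
    intro y hy
    obtain ⟨j, _, rfl⟩ := Finset.mem_image.mp hy
    exact orbitSize_pow_apply hx₀d j
  have hFOfwd : ∀ y ∈ FO, ψ y ∈ FO := by
    intro y hy
    obtain ⟨j, hj, rfl⟩ := Finset.mem_image.mp hy
    have hjd : j < d := Finset.mem_range.mp hj
    have h1 : ψ ((ψ ^ j) x₀) = (ψ ^ (j+1)) x₀ := by rw [pow_succ']; rfl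
    rw [h1]
    rcases Nat.lt_or_ge (j+1) d with h | h
    · exact Finset.mem_image.mpr ⟨j+1, Finset.mem_range.mpr h, rfl⟩
    · have : j + 1 = d := by omega
      rw [this, hx₀d.2.1]
      exact Finset.mem_image.mpr ⟨0, Finset.mem_range.mpr hd, by simp⟩
  have hFObwd : ∀ y : V, ψ y ∈ FO → y ∈ FO := by
    intro y hy
    obtain ⟨j, hj, hjeq⟩ := Finset.mem_image.mp hy
    have hjd : j < d := Finset.mem_range.mp hj
    rcases Nat.eq_zero_or_pos j with rfl | hjpos
    · have h2 : ψ ((ψ ^ (d-1)) x₀) = x₀ := by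
        have h3 : ψ * ψ ^ (d - 1) = ψ ^ d := by
          rw [← pow_succ']; congr 1; omega
        calc ψ ((ψ ^ (d-1)) x₀) = (ψ * ψ ^ (d-1)) x₀ := rfl
          _ = (ψ ^ d) x₀ := by rw [h3]
          _ = x₀ := hx₀d.2.1
      have hx0eq : x₀ = ψ y := by simpa using hjeq
      have : y = (ψ ^ (d-1)) x₀ := ψ.injective (by rw [← hx0eq, h2])
      rw [this]
      exact Finset.mem_image.mpr ⟨d-1, Finset.mem_range.mpr (by omega), rfl⟩
    · have h2 : ψ ((ψ ^ (j-1)) x₀) = (ψ ^ j) x₀ := by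
        have h3 : ψ * ψ ^ (j - 1) = ψ ^ j := by
          rw [← pow_succ']; congr 1; omega
        calc ψ ((ψ ^ (j-1)) x₀) = (ψ * ψ ^ (j-1)) x₀ := rfl
          _ = (ψ ^ j) x₀ := by rw [h3]
      have : y = (ψ ^ (j-1)) x₀ := ψ.injective (by rw [h2, hjeq])
      rw [this]
      exact Finset.mem_image.mpr ⟨j-1, Finset.mem_range.mpr (by omega), rfl⟩
  -- the expansion
  set S' : Set V := (S \ ↑FO) ∪ descSet n (↑FO : Set V) with hS'
  obtain ⟨hS'b, hS'f⟩ := expand_finset hn hSb hSf FO hFOsub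
  -- descendants are not in S, and their orbit sizes equal d
  have hdescnotS : ∀ (u : V), u ∈ S → ∀ i : Fin n, desc u i ∉ S := by
    intro u hu i hmem
    have h1 : applyWord (desc u i) ([] : List (Fin n)) = applyWord u [i] := rfl
    have := (hfree hmem hu h1).2
    simp at this
  have hdescsz : ∀ (u : V), u ∈ S → OrbitSize ψ u d → ∀ i : Fin n,
      OrbitSize ψ (desc u i) d := by
    intro u hu hud i
    have key : ∀ e : ℕ, ((ψ ^ e) (desc u i) = desc u i ↔ (ψ ^ e) u = u) := by
      intro e
      have h1 : (ψ ^ e) (desc u i) = desc ((ψ ^ e) u) i := (hψ.pow e).1 u i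
      rw [h1]
      constructor
      · intro h
        have h2 : applyWord ((ψ ^ e) u) [i] = applyWord u [i] := h
        exact (hfree (pow_mem_of_inv hSinv hu e) hu h2).1
      · intro h; rw [h]
    exact ⟨hd, (key d).mpr hud.2.1, fun e he hlt hee => hud.2.2 e he hlt ((key e).mp hee)⟩
  -- invariance of S'
  have hS'maps : ∀ x ∈ S', ψ x ∈ S' := by
    rintro x (⟨hxS, hxO⟩ | ⟨u, hu, i, rfl⟩)
    · left
      refine ⟨(hSinv x).mp hxS, fun hc => hxO (hFObwd x hc)⟩
    · right
      exact ⟨ψ u, hFOfwd u hu, i, hψ.1 u i⟩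
  have hS'inv : ∀ x, x ∈ S' ↔ ψ x ∈ S' := maps_to_iff_of_finite hS'f hS'maps
  -- the descendants, as a finset
  set FDD : Finset V := (FO ×ˢ (Finset.univ : Finset (Fin n))).image
    (fun p => desc p.1 p.2) with hFDD
  have hFDDeq : (↑FDD : Set V) = descSet n (↑FO : Set V) := by
    ext v
    constructor
    · intro hv
      obtain ⟨⟨u, i⟩, hp, rfl⟩ := Finset.mem_image.mp hv
      exact ⟨u, (Finset.mem_product.mp hp).1, i, rfl⟩
    · rintro ⟨u, hu, i, rfl⟩
      exact Finset.mem_image.mpr ⟨(u, i), Finset.mem_product.mpr ⟨hu, Finset.mem_univ i⟩, rfl⟩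
  have hFDDcard : FDD.card = d * n := by
    rw [hFDD, Finset.card_image_of_injOn, Finset.card_product, Finset.card_univ,
      Fintype.card_fin, hFOcard]
    rintro ⟨u, i⟩ hp ⟨u', i'⟩ hp' heq
    have hu : u ∈ S := hFOsub (Finset.mem_product.mp hp).1
    have hu' : u' ∈ S := hFOsub (Finset.mem_product.mp hp').1
    have h1 : applyWord u [i] = applyWord u' [i'] := heq
    obtain ⟨he1, he2⟩ := hfree hu hu' h1
    simp only [List.cons.injEq] at he2
    exact Prod.ext he1 he2.1
  -- counting
  refine ⟨S', hS'b, hS'f, hS'inv, ?_, ?_, ?_⟩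
  · -- CycType
    ext e
    constructor
    · rintro ⟨x, hx, hsz⟩
      rcases hx with ⟨hxS, _⟩ | ⟨u, hu, i, rfl⟩
      · exact ⟨x, hxS, hsz⟩
      · have hde : e = d := orbitSize_unique hsz
          (hdescsz u (hFOsub hu) (hFOsz u hu) i)
        exact ⟨x₀, hx₀, hde ▸ hx₀d⟩
    · rintro ⟨x, hx, hsz⟩
      by_cases hxO : x ∈ FO
      · have hde : e = d := orbitSize_unique hsz (hFOsz x hxO)
        refine ⟨desc x₀ ⟨0, by omega⟩, Or.inr ⟨x₀, ?_, _, rfl⟩, ?_⟩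
        · exact Finset.mem_image.mpr ⟨0, Finset.mem_range.mpr hd, by simp⟩
        · rw [hde]; exact hdescsz x₀ hx₀ hx₀d _
      · exact ⟨x, Or.inl ⟨hx, hxO⟩, hsz⟩
  · -- Mult at d
    have hsetd : {x ∈ S' | OrbitSize ψ x d}
        = ({x ∈ S | OrbitSize ψ x d} \ ↑FO) ∪ (↑FDD : Set V) := by
      ext x
      constructor
      · rintro ⟨hx | ⟨u, hu, i, rfl⟩, hsz⟩
        · exact Or.inl ⟨⟨hx.1, hsz⟩, hx.2⟩
        · right; rw [hFDDeq]; exact ⟨u, hu, i, rfl⟩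
      · rintro (⟨⟨hxS, hsz⟩, hxO⟩ | hx)
        · exact ⟨Or.inl ⟨hxS, hxO⟩, hsz⟩
        · rw [hFDDeq] at hx
          obtain ⟨u, hu, i, rfl⟩ := hx
          exact ⟨Or.inr ⟨u, hu, i, rfl⟩, hdescsz u (hFOsub hu) (hFOsz u hu) i⟩
    have hSdfin : ({x ∈ S | OrbitSize ψ x d}).Finite := hSf.subset (fun x hx => hx.1)
    have hOsubSd : (↑FO : Set V) ⊆ {x ∈ S | OrbitSize ψ x d} := by
      intro x hx
      exact ⟨hFOsub hx, hFOsz x hx⟩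
    have hdisj : Disjoint ({x ∈ S | OrbitSize ψ x d} \ ↑FO) (↑FDD : Set V) := by
      rw [Set.disjoint_right]
      intro x hx hc
      rw [hFDDeq] at hx
      obtain ⟨u, hu, i, rfl⟩ := hx
      exact hdescnotS u (hFOsub hu) i hc.1.1
    -- S_d cardinality as a multiple of d
    obtain ⟨m, c, hsum, hcard, -⟩ := orbit_count hd (fun _ => 1) hSdfin.toFinset
      (by
        intro x hx
        rw [Set.Finite.mem_toFinset] at *
        exact ⟨(hSinv x).mp hx.1, orbitSize_apply hx.2⟩)
      (fun x hx => ((hSdfin.mem_toFinset).mp hx).2)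
      (fun x hx => rfl)
    have hSdncard : ({x ∈ S | OrbitSize ψ x d}).ncard = d * c := by
      rw [Set.ncard_eq_toFinset_card _ hSdfin, hcard]
    have hcge : d ≤ d * c := by
      have h1 : (↑FO : Set V).ncard ≤ ({x ∈ S | OrbitSize ψ x d}).ncard :=
        Set.ncard_le_ncard hOsubSd hSdfin
      rw [Set.ncard_coe_finset, hFOcard, hSdncard] at h1
      exact h1
    have hstep1 : ({x ∈ S | OrbitSize ψ x d} \ ↑FO).ncard + (↑FO : Set V).ncard
        = ({x ∈ S | OrbitSize ψ x d}).ncard :=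
      Set.ncard_diff_add_ncard_of_subset hOsubSd hSdfin
    have hstep2 : ({x ∈ S' | OrbitSize ψ x d}).ncard
        = ({x ∈ S | OrbitSize ψ x d} \ ↑FO).ncard + (↑FDD : Set V).ncard := by
      rw [hsetd]
      exact Set.ncard_union_eq hdisj (hSdfin.subset Set.diff_subset) (FDD.finite_toSet)
    have hc1 : 1 ≤ c := by
      by_contra hq
      push_neg at hq
      interval_cases c
      omega
    have harith : ({x ∈ S' | OrbitSize ψ x d}).ncard = d * (c + (n-1)) := by
      rw [hstep2]
      rw [Set.ncard_coe_finset, hFDDcard]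
      have e1 : ({x ∈ S | OrbitSize ψ x d} \ ↑FO).ncard = d * c - d := by
        rw [← hSdncard, ← hstep1]
        rw [Set.ncard_coe_finset, hFOcard]
        omega
      rw [e1]
      have e2 : d * n = d * (n - 1) + d := by
        cases n with
        | zero => omega
        | succ k => simp [Nat.mul_succ]
      have e3 : d * (c + (n-1)) = d * c + d * (n-1) := by ring
      omega
    show ({x ∈ S' | OrbitSize ψ x d}).ncard / d = ({x ∈ S | OrbitSize ψ x d}).ncard / d + (n-1)
    rw [harith, hSdncard, Nat.mul_div_cancel_left _ hd, Nat.mul_div_cancel_left _ hd]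
  · -- Mult at e ≠ d
    intro e hne
    have hsete : {x ∈ S' | OrbitSize ψ x e} = {x ∈ S | OrbitSize ψ x e} := by
      ext x
      constructor
      · rintro ⟨hx | ⟨u, hu, i, rfl⟩, hsz⟩
        · exact ⟨hx.1, hsz⟩
        · exact absurd (orbitSize_unique hsz (hdescsz u (hFOsub hu) (hFOsz u hu) i)) hne
      · rintro ⟨hxS, hsz⟩
        have hxO : x ∉ FO := fun hc => hne (orbitSize_unique hsz (hFOsz x hc))
        exact ⟨Or.inl ⟨hxS, hxO⟩, hsz⟩
    show ({x ∈ S' | OrbitSize ψ x e}).ncard / e = ({x ∈ S | OrbitSize ψ x e}).ncard / e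
    rw [hsete]

end OrbitExpand
section Pump
variable {n : ℕ} {V : Type} [HigmanAlgebra n V]

lemma pump_aux (hn : 2 ≤ n) {ψ : Equiv.Perm V} (hψ : IsHom n ⇑ψ)
    (M : ℕ → ℕ) (B : ℕ) :
    ∀ (k : ℕ) (S₀ : Set V), IsBasis n S₀ → S₀.Finite → (∀ x, x ∈ S₀ ↔ ψ x ∈ S₀) →
    (∀ d, d ∈ CycType ψ S₀ → d ≤ B) →
    (∀ d, Mult ψ S₀ d ≤ M d) →
    (∀ d, Mult ψ S₀ d ≡ M d [MOD n-1]) →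
    (∀ d, d ∉ CycType ψ S₀ → M d = Mult ψ S₀ d) →
    (∑ d ∈ Finset.range (B+1), (M d - Mult ψ S₀ d)) ≤ k →
    ∃ S, IsBasis n S ∧ S.Finite ∧ (∀ x, x ∈ S ↔ ψ x ∈ S) ∧
      CycType ψ S = CycType ψ S₀ ∧ (∀ d, Mult ψ S d = M d) := by
  intro k
  induction k with
  | zero =>
      intro S₀ hSb hSf hSinv hbound hge hmod hout hμ
      refine ⟨S₀, hSb, hSf, hSinv, rfl, fun d => ?_⟩
      by_cases hdB : d ≤ B
      · have h1 : M d - Mult ψ S₀ d = 0 := by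
          have := Finset.sum_eq_zero_iff.mp (Nat.le_zero.mp hμ) d
            (Finset.mem_range.mpr (by omega))
          exact this
        have := hge d
        omega
      · by_cases hc : d ∈ CycType ψ S₀
        · exact absurd (hbound d hc) hdB
        · exact (hout d hc).symm
  | succ k ih =>
      intro S₀ hSb hSf hSinv hbound hge hmod hout hμ
      by_cases hzero : (∑ d ∈ Finset.range (B+1), (M d - Mult ψ S₀ d)) = 0
      · exact ih S₀ hSb hSf hSinv hbound hge hmod hout (by omega)
      · -- there is a deficient d
        have hex : ∃ d, d ≤ B ∧ Mult ψ S₀ d < M d := by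
          by_contra hno
          push_neg at hno
          apply hzero
          apply Finset.sum_eq_zero
          intro d hd
          have h1 := hno d (by simpa using Nat.lt_succ_iff.mp (Finset.mem_range.mp hd))
          have h2 := hge d
          omega
        obtain ⟨d, hdB, hdlt⟩ := hex
        have hdcyc : d ∈ CycType ψ S₀ := by
          by_contra hc
          have := hout d hc
          omega
        obtain ⟨x₀, hx₀, hx₀d⟩ := hdcyc
        obtain ⟨S', hS'b, hS'f, hS'inv, hS'ct, hS'd, hS'e⟩ :=
          orbit_expand hn hSb hSf hψ hSinv hx₀ hx₀d
        have hgap : Mult ψ S₀ d + (n-1) ≤ M d := by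
          have hdvd : (n-1) ∣ (M d - Mult ψ S₀ d) :=
            (Nat.modEq_iff_dvd' (le_of_lt hdlt)).mp (hmod d)
          obtain ⟨t, ht⟩ := hdvd
          rcases Nat.eq_zero_or_pos t with rfl | htpos
          · omega
          · have : (n-1) * 1 ≤ (n-1) * t := Nat.mul_le_mul_left _ htpos
            omega
        have hdcyc' : d ∈ CycType ψ S₀ := ⟨x₀, hx₀, hx₀d⟩
        -- new hypotheses
        have hge' : ∀ e, Mult ψ S' e ≤ M e := by
          intro e
          by_cases he : e = d
          · subst he; omega
          · rw [hS'e e he]; exact hge e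
        have hmod' : ∀ e, Mult ψ S' e ≡ M e [MOD n-1] := by
          intro e
          by_cases he : e = d
          · subst he
            rw [hS'd]
            calc Mult ψ S₀ e + (n-1) ≡ Mult ψ S₀ e + 0 [MOD n-1] :=
                  Nat.ModEq.add_left _ (Nat.modEq_zero_iff_dvd.mpr dvd_rfl)
              _ = Mult ψ S₀ e := by omega
              _ ≡ M e [MOD n-1] := hmod e
          · rw [hS'e e he]; exact hmod e
        have hout' : ∀ e, e ∉ CycType ψ S' → M e = Mult ψ S' e := by
          intro e he
          rw [hS'ct] at he
          have hne : e ≠ d := fun hc => he (hc ▸ hdcyc')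
          rw [hS'e e hne]
          exact hout e he
        have hbound' : ∀ e, e ∈ CycType ψ S' → e ≤ B := by
          intro e he
          rw [hS'ct] at he
          exact hbound e he
        have hμ' : (∑ e ∈ Finset.range (B+1), (M e - Mult ψ S' e)) ≤ k := by
          have hsumlt : (∑ e ∈ Finset.range (B+1), (M e - Mult ψ S' e))
              < ∑ e ∈ Finset.range (B+1), (M e - Mult ψ S₀ e) := by
            apply Finset.sum_lt_sum
            · intro e he
              by_cases heq : e = d
              · subst heq; rw [hS'd]; omega
              · rw [hS'e e heq]
            · exact ⟨d, Finset.mem_range.mpr (by omega), by rw [hS'd]; omega⟩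
          omega
        obtain ⟨S, h1, h2, h3, h4, h5⟩ := ih S' hS'b hS'f hS'inv hbound' hge' hmod' hout' hμ'
        exact ⟨S, h1, h2, h3, h4.trans hS'ct, h5⟩

end Pump
section Match
variable {V : Type}

lemma orbit_image_facts {ψ : Equiv.Perm V} {x₀ : V} {d : ℕ} (h : OrbitSize ψ x₀ d) :
    ((fun j => (ψ ^ j) x₀) '' ↑(Finset.range d)).ncard = d ∧
    (∀ v ∈ (fun j => (ψ ^ j) x₀) '' ↑(Finset.range d),
      ψ v ∈ (fun j => (ψ ^ j) x₀) '' ↑(Finset.range d)) ∧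
    (∀ v : V, ψ v ∈ (fun j => (ψ ^ j) x₀) '' ↑(Finset.range d) →
      v ∈ (fun j => (ψ ^ j) x₀) '' ↑(Finset.range d)) := by
  have hd : 0 < d := h.1
  refine ⟨?_, ?_, ?_⟩
  · rw [Set.ncard_image_of_injOn, Set.ncard_coe_finset, Finset.card_range]
    intro a ha b hb hab
    simp only [Finset.coe_range, Set.mem_Iio] at ha hb
    exact pow_orbit_inj h ha hb hab
  · rintro v ⟨j, hj, rfl⟩
    simp only [Finset.coe_range, Set.mem_Iio] at hj
    have h1 : ψ ((ψ ^ j) x₀) = (ψ ^ (j+1)) x₀ := by rw [pow_succ']; rfl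
    rw [h1]
    rcases Nat.lt_or_ge (j+1) d with hc | hc
    · exact ⟨j+1, by simp [hc], rfl⟩
    · have : j + 1 = d := by omega
      rw [this, h.2.1]
      exact ⟨0, by simp [hd], by simp⟩
  · rintro v ⟨j, hj, hjeq⟩
    simp only [Finset.coe_range, Set.mem_Iio] at hj
    rcases Nat.eq_zero_or_pos j with rfl | hjpos
    · have h2 : ψ ((ψ ^ (d-1)) x₀) = x₀ := by
        have h3 : ψ * ψ ^ (d - 1) = ψ ^ d := by
          rw [← pow_succ']; congr 1; omega
        calc ψ ((ψ ^ (d-1)) x₀) = (ψ * ψ ^ (d-1)) x₀ := rfl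
          _ = (ψ ^ d) x₀ := by rw [h3]
          _ = x₀ := h.2.1
      have hx0eq : x₀ = ψ v := by simpa using hjeq
      have : v = (ψ ^ (d-1)) x₀ := ψ.injective (by rw [← hx0eq, h2])
      exact ⟨d-1, by simp; omega, this.symm⟩
    · have h2 : ψ ((ψ ^ (j-1)) x₀) = (ψ ^ j) x₀ := by
        have h3 : ψ * ψ ^ (j - 1) = ψ ^ j := by
          rw [← pow_succ']; congr 1; omega
        calc ψ ((ψ ^ (j-1)) x₀) = (ψ * ψ ^ (j-1)) x₀ := rfl
          _ = (ψ ^ j) x₀ := by rw [h3]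
      have hjeq' : (ψ ^ j) x₀ = ψ v := hjeq
      have : v = (ψ ^ (j-1)) x₀ := ψ.injective (by rw [h2, hjeq'])
      exact ⟨j-1, by simp; omega, this.symm⟩

lemma match_orbits {ψ φ : Equiv.Perm V} :
    ∀ (k : ℕ) (A B : Set V), A.Finite → B.Finite → A.ncard ≤ k →
    (∀ x, x ∈ A ↔ ψ x ∈ A) → (∀ x, x ∈ B ↔ φ x ∈ B) →
    (∀ x ∈ A, ∃ d, OrbitSize ψ x d) → (∀ x ∈ B, ∃ d, OrbitSize φ x d) →
    (∀ d, ({x ∈ A | OrbitSize ψ x d}).ncard = ({x ∈ B | OrbitSize φ x d}).ncard) →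
    ∃ θ θ' : V → V, (∀ x ∈ A, θ x ∈ B) ∧ (∀ x ∈ B, θ' x ∈ A) ∧
      (∀ x ∈ A, θ' (θ x) = x) ∧ (∀ x ∈ B, θ (θ' x) = x) ∧
      (∀ x ∈ A, θ (ψ x) = φ (θ x)) := by
  classical
  intro k
  induction k with
  | zero =>
      intro A B hAf hBf hcard hAinv hBinv hexA hexB hcnt
      have hA : A = ∅ := by
        rw [← Set.ncard_eq_zero hAf]; omega
      have hB : B = ∅ := by
        by_contra hc
        obtain ⟨b, hb⟩ := Set.nonempty_iff_ne_empty.mpr hc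
        obtain ⟨d, hd⟩ := hexB b hb
        have h1 : 0 < ({x ∈ B | OrbitSize φ x d}).ncard := by
          rw [Set.ncard_pos (hBf.subset (fun x hx => hx.1))]
          exact ⟨b, hb, hd⟩
        rw [← hcnt d] at h1
        have h2 : ({x ∈ A | OrbitSize ψ x d}) ⊆ A := fun x hx => hx.1
        have h3 := Set.ncard_le_ncard h2 hAf
        omega
      subst hA; subst hB
      exact ⟨id, id, by simp, by simp, by simp, by simp, by simp⟩
  | succ k ih =>
      intro A B hAf hBf hcard hAinv hBinv hexA hexB hcnt
      rcases A.eq_empty_or_nonempty with rfl | ⟨x₀, hx₀⟩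
      · -- same as base case
        have hB : B = ∅ := by
          by_contra hc
          obtain ⟨b, hb⟩ := Set.nonempty_iff_ne_empty.mpr hc
          obtain ⟨d, hd⟩ := hexB b hb
          have h1 : 0 < ({x ∈ B | OrbitSize φ x d}).ncard := by
            rw [Set.ncard_pos (hBf.subset (fun x hx => hx.1))]
            exact ⟨b, hb, hd⟩
          rw [← hcnt d] at h1
          simp at h1
        subst hB
        exact ⟨id, id, by simp, by simp, by simp, by simp, by simp⟩
      · obtain ⟨d, hx₀d⟩ := hexA x₀ hx₀
        have hd : 0 < d := hx₀d.1
        -- get a matching element in B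
        have hBd : ({x ∈ B | OrbitSize φ x d}).Nonempty := by
          rw [← Set.ncard_pos (hBf.subset (fun x hx => hx.1)), ← hcnt d,
            Set.ncard_pos (hAf.subset (fun x hx => hx.1))]
          exact ⟨x₀, hx₀, hx₀d⟩
        obtain ⟨b₀, hb₀, hb₀d⟩ := hBd
        obtain ⟨hOAcard, hOAfwd, hOAbwd⟩ := orbit_image_facts hx₀d
        obtain ⟨hOBcard, hOBfwd, hOBbwd⟩ := orbit_image_facts hb₀d
        set OA : Set V := (fun j => (ψ ^ j) x₀) '' ↑(Finset.range d) with hOA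
        set OB : Set V := (fun j => (φ ^ j) b₀) '' ↑(Finset.range d) with hOB
        have hpowmemA : ∀ j : ℕ, (ψ ^ j) x₀ ∈ A := fun j => pow_mem_of_inv hAinv hx₀ j
        have hpowmemB : ∀ j : ℕ, (φ ^ j) b₀ ∈ B := fun j => pow_mem_of_inv hBinv hb₀ j
        have hOAsub : OA ⊆ A := by rintro v ⟨j, _, rfl⟩; exact hpowmemA j
        have hOBsub : OB ⊆ B := by rintro v ⟨j, _, rfl⟩; exact hpowmemB j
        have hOAsz : ∀ v ∈ OA, OrbitSize ψ v d := by
          rintro v ⟨j, _, rfl⟩; exact orbitSize_pow_apply hx₀d j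
        have hOBsz : ∀ v ∈ OB, OrbitSize φ v d := by
          rintro v ⟨j, _, rfl⟩; exact orbitSize_pow_apply hb₀d j
        -- recursion on the complements
        have hAinv' : ∀ x, x ∈ A \ OA ↔ ψ x ∈ A \ OA := by
          intro x
          constructor
          · rintro ⟨hxA, hxO⟩
            exact ⟨(hAinv x).mp hxA, fun hc => hxO (hOAbwd x hc)⟩
          · rintro ⟨hxA, hxO⟩
            exact ⟨(hAinv x).mpr hxA, fun hc => hxO (hOAfwd x hc)⟩
        have hBinv' : ∀ x, x ∈ B \ OB ↔ φ x ∈ B \ OB := by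
          intro x
          constructor
          · rintro ⟨hxB, hxO⟩
            exact ⟨(hBinv x).mp hxB, fun hc => hxO (hOBbwd x hc)⟩
          · rintro ⟨hxB, hxO⟩
            exact ⟨(hBinv x).mpr hxB, fun hc => hxO (hOBfwd x hc)⟩
        have hcnt' : ∀ e, ({x ∈ A \ OA | OrbitSize ψ x e}).ncard
            = ({x ∈ B \ OB | OrbitSize φ x e}).ncard := by
          intro e
          by_cases he : e = d
          · subst he
            have hsplitA : {x ∈ A \ OA | OrbitSize ψ x e} = {x ∈ A | OrbitSize ψ x e} \ OA := by
              ext x; constructor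
              · rintro ⟨⟨h1, h2⟩, h3⟩; exact ⟨⟨h1, h3⟩, h2⟩
              · rintro ⟨⟨h1, h3⟩, h2⟩; exact ⟨⟨h1, h2⟩, h3⟩
            have hsplitB : {x ∈ B \ OB | OrbitSize φ x e} = {x ∈ B | OrbitSize φ x e} \ OB := by
              ext x; constructor
              · rintro ⟨⟨h1, h2⟩, h3⟩; exact ⟨⟨h1, h3⟩, h2⟩
              · rintro ⟨⟨h1, h3⟩, h2⟩; exact ⟨⟨h1, h2⟩, h3⟩
            have hsubA : OA ⊆ {x ∈ A | OrbitSize ψ x e} := fun v hv => ⟨hOAsub hv, hOAsz v hv⟩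
            have hsubB : OB ⊆ {x ∈ B | OrbitSize φ x e} := fun v hv => ⟨hOBsub hv, hOBsz v hv⟩
            have h1 := Set.ncard_diff_add_ncard_of_subset hsubA (hAf.subset (fun x hx => hx.1))
            have h2 := Set.ncard_diff_add_ncard_of_subset hsubB (hBf.subset (fun x hx => hx.1))
            rw [hsplitA, hsplitB]
            have := hcnt e
            omega
          · have hsplitA : {x ∈ A \ OA | OrbitSize ψ x e} = {x ∈ A | OrbitSize ψ x e} := by
              ext x; constructor
              · rintro ⟨⟨h1, _⟩, h3⟩; exact ⟨h1, h3⟩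
              · rintro ⟨h1, h3⟩
                refine ⟨⟨h1, fun hc => he ?_⟩, h3⟩
                exact orbitSize_unique h3 (hOAsz x hc)
            have hsplitB : {x ∈ B \ OB | OrbitSize φ x e} = {x ∈ B | OrbitSize φ x e} := by
              ext x; constructor
              · rintro ⟨⟨h1, _⟩, h3⟩; exact ⟨h1, h3⟩
              · rintro ⟨h1, h3⟩
                refine ⟨⟨h1, fun hc => he ?_⟩, h3⟩
                exact orbitSize_unique h3 (hOBsz x hc)
            rw [hsplitA, hsplitB]
            exact hcnt e
        have hcard' : (A \ OA).ncard ≤ k := by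
          have h1 := Set.ncard_diff_add_ncard_of_subset hOAsub hAf
          omega
        obtain ⟨θr, θr', hm1, hm2, hm3, hm4, hm5⟩ := ih (A \ OA) (B \ OB)
          (hAf.subset Set.diff_subset) (hBf.subset Set.diff_subset) hcard'
          hAinv' hBinv' (fun x hx => hexA x hx.1) (fun x hx => hexB x hx.1) hcnt'
        -- index functions
        set jA : V → ℕ := fun v => if h : ∃ j, j < d ∧ (ψ ^ j) x₀ = v then Nat.find h else 0
          with hjA
        set jB : V → ℕ := fun v => if h : ∃ j, j < d ∧ (φ ^ j) b₀ = v then Nat.find h else 0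
          with hjB
        have hjAval : ∀ j, j < d → jA ((ψ ^ j) x₀) = j := by
          intro j hj
          have hex : ∃ j', j' < d ∧ (ψ ^ j') x₀ = (ψ ^ j) x₀ := ⟨j, hj, rfl⟩
          rw [hjA]
          simp only [dif_pos hex]
          have hspec := Nat.find_spec hex
          exact pow_orbit_inj hx₀d hspec.1 hj hspec.2
        have hjBval : ∀ j, j < d → jB ((φ ^ j) b₀) = j := by
          intro j hj
          have hex : ∃ j', j' < d ∧ (φ ^ j') b₀ = (φ ^ j) b₀ := ⟨j, hj, rfl⟩
          rw [hjB]
          simp only [dif_pos hex]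
          have hspec := Nat.find_spec hex
          exact pow_orbit_inj hb₀d hspec.1 hj hspec.2
        set θ : V → V := fun v => if v ∈ OA then (φ ^ (jA v)) b₀ else θr v with hθ
        set θ' : V → V := fun v => if v ∈ OB then (ψ ^ (jB v)) x₀ else θr' v with hθ'
        have hOAmem : ∀ j, j < d → (ψ ^ j) x₀ ∈ OA := by
          intro j hj; exact ⟨j, by simpa using hj, rfl⟩
        have hOBmem : ∀ j, j < d → (φ ^ j) b₀ ∈ OB := by
          intro j hj; exact ⟨j, by simpa using hj, rfl⟩
        have hθOA : ∀ j, j < d → θ ((ψ ^ j) x₀) = (φ ^ j) b₀ := by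
          intro j hj
          rw [hθ]
          simp only [if_pos (hOAmem j hj)]
          rw [hjAval j hj]
        have hθ'OB : ∀ j, j < d → θ' ((φ ^ j) b₀) = (ψ ^ j) x₀ := by
          intro j hj
          rw [hθ']
          simp only [if_pos (hOBmem j hj)]
          rw [hjBval j hj]
        have hθr_nOB : ∀ x ∈ A \ OA, θr x ∉ OB := fun x hx => (hm1 x hx).2
        have hθr'_nOA : ∀ x ∈ B \ OB, θr' x ∉ OA := fun x hx => (hm2 x hx).2
        refine ⟨θ, θ', ?_, ?_, ?_, ?_, ?_⟩
        · -- θ maps A to B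
          intro x hx
          by_cases hmem : x ∈ OA
          · obtain ⟨j, hj, rfl⟩ := hmem
            simp only [Finset.coe_range, Set.mem_Iio] at hj
            rw [hθOA j hj]
            exact hpowmemB j
          · rw [hθ]; simp only [if_neg hmem]
            exact (hm1 x ⟨hx, hmem⟩).1
        · -- θ' maps B to A
          intro x hx
          by_cases hmem : x ∈ OB
          · obtain ⟨j, hj, rfl⟩ := hmem
            simp only [Finset.coe_range, Set.mem_Iio] at hj
            rw [hθ'OB j hj]
            exact hpowmemA j
          · rw [hθ']; simp only [if_neg hmem]
            exact (hm2 x ⟨hx, hmem⟩).1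
        · -- θ' ∘ θ = id on A
          intro x hx
          by_cases hmem : x ∈ OA
          · obtain ⟨j, hj, rfl⟩ := hmem
            simp only [Finset.coe_range, Set.mem_Iio] at hj
            rw [hθOA j hj, hθ'OB j hj]
          · rw [hθ]; simp only [if_neg hmem]
            rw [hθ']; simp only [if_neg (hθr_nOB x ⟨hx, hmem⟩)]
            exact hm3 x ⟨hx, hmem⟩
        · -- θ ∘ θ' = id on B
          intro x hx
          by_cases hmem : x ∈ OB
          · obtain ⟨j, hj, rfl⟩ := hmem
            simp only [Finset.coe_range, Set.mem_Iio] at hj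
            rw [hθ'OB j hj, hθOA j hj]
          · rw [hθ']; simp only [if_neg hmem]
            rw [hθ]; simp only [if_neg (hθr'_nOA x ⟨hx, hmem⟩)]
            exact hm4 x ⟨hx, hmem⟩
        · -- conjugation
          intro x hx
          by_cases hmem : x ∈ OA
          · obtain ⟨j, hj, rfl⟩ := hmem
            simp only [Finset.coe_range, Set.mem_Iio] at hj
            have h1 : ψ ((ψ ^ j) x₀) = (ψ ^ (j+1)) x₀ := by rw [pow_succ']; rfl
            have h2 : φ ((φ ^ j) b₀) = (φ ^ (j+1)) b₀ := by rw [pow_succ']; rfl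
            rw [hθOA j hj, h1, h2]
            rcases Nat.lt_or_ge (j+1) d with hc | hc
            · rw [hθOA (j+1) hc]
            · have hjd : j + 1 = d := by omega
              rw [hjd, hx₀d.2.1, hb₀d.2.1]
              have h0 : (ψ ^ 0) x₀ = x₀ := by simp
              have h0' : (φ ^ 0) b₀ = b₀ := by simp
              rw [← h0, hθOA 0 hd, h0']
          · have hxd : x ∈ A \ OA := ⟨hx, hmem⟩
            have hpx : ψ x ∈ A \ OA := (hAinv' x).mp hxd
            rw [hθ]
            simp only [if_neg hpx.2, if_neg hmem]
            exact hm5 x hxd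

end Match
section Backward
variable {n : ℕ} {V : Type} [HigmanAlgebra n V]

lemma cycType_le_ncard {ψ : Equiv.Perm V} {X : Set V} (hXf : X.Finite)
    (hinv : ∀ x, x ∈ X ↔ ψ x ∈ X) {d : ℕ} (hd : d ∈ CycType ψ X) : d ≤ X.ncard := by
  obtain ⟨x₀, hx₀, hsz⟩ := hd
  obtain ⟨hcard, -, -⟩ := orbit_image_facts hsz
  have hsub : ((fun j => (ψ ^ j) x₀) '' ↑(Finset.range d)) ⊆ X := by
    rintro v ⟨j, _, rfl⟩
    exact pow_mem_of_inv hinv hx₀ j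
  calc d = ((fun j => (ψ ^ j) x₀) '' ↑(Finset.range d)).ncard := hcard.symm
    _ ≤ X.ncard := Set.ncard_le_ncard hsub hXf

lemma mult_of_not_cycType {ψ : Equiv.Perm V} {X : Set V} {d : ℕ}
    (hd : d ∉ CycType ψ X) : Mult ψ X d = 0 := by
  have : {x ∈ X | OrbitSize ψ x d} = ∅ := by
    ext x
    simp only [Set.mem_setOf_eq, Set.mem_empty_iff_false, iff_false, not_and]
    intro hx hsz
    exact hd ⟨x, hx, hsz⟩
  show ({x ∈ X | OrbitSize ψ x d}).ncard / d = 0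
  rw [this]
  simp

lemma mult_zero (ψ : Equiv.Perm V) (X : Set V) : Mult ψ X 0 = 0 := by
  show _ / 0 = 0
  simp

lemma card_eq_mul_mult {ψ : Equiv.Perm V} {X : Set V} (hXf : X.Finite)
    (hinv : ∀ x, x ∈ X ↔ ψ x ∈ X) {d : ℕ} (hd : 0 < d) :
    ({x ∈ X | OrbitSize ψ x d}).ncard = d * Mult ψ X d := by
  have hXdf : ({x ∈ X | OrbitSize ψ x d}).Finite := hXf.subset (fun x hx => hx.1)
  obtain ⟨m, c, hsum, hcard, -⟩ := orbit_count hd (fun _ => 1) hXdf.toFinset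
    (by
      intro x hx
      rw [Set.Finite.mem_toFinset] at *
      exact ⟨(hinv x).mp hx.1, orbitSize_apply hx.2⟩)
    (fun x hx => ((hXdf.mem_toFinset).mp hx).2)
    (fun x hx => rfl)
  have h1 : ({x ∈ X | OrbitSize ψ x d}).ncard = d * c := by
    rw [Set.ncard_eq_toFinset_card _ hXdf, hcard]
  show _ = d * (({x ∈ X | OrbitSize ψ x d}).ncard / d)
  rw [h1, Nat.mul_div_cancel_left _ hd]

lemma backward_dir (hn : 2 ≤ n) {Xψ Xφ : Set V} (hXψb : IsBasis n Xψ) (hXψf : Xψ.Finite)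
    (hXφb : IsBasis n Xφ) (hXφf : Xφ.Finite)
    {ψ φ : Equiv.Perm V} (hψ : IsHom n ⇑ψ) (hφ : IsHom n ⇑φ)
    (hperψ : Periodic ψ) (hperφ : Periodic φ)
    (hψinv : ∀ x, x ∈ Xψ ↔ ψ x ∈ Xψ) (hφinv : ∀ x, x ∈ Xφ ↔ φ x ∈ Xφ)
    (hct : CycType ψ Xψ = CycType φ Xφ)
    (hmult : ∀ d, 0 < d → Mult ψ Xψ d ≡ Mult φ Xφ d [MOD n - 1]) :
    ∃ ρ : Equiv.Perm V, IsHom n ⇑ρ ∧ ∀ v, ρ (ψ v) = φ (ρ v) := by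
  classical
  set M : ℕ → ℕ := fun d => max (Mult ψ Xψ d) (Mult φ Xφ d) with hM
  set B : ℕ := max Xψ.ncard Xφ.ncard with hB
  -- pump the ψ side
  obtain ⟨Sψ, hSψb, hSψf, hSψinv, hSψct, hSψm⟩ := pump_aux hn hψ M B _ Xψ hXψb hXψf hψinv
    (fun d hd => le_trans (cycType_le_ncard hXψf hψinv hd) (le_max_left _ _))
    (fun d => le_max_left _ _)
    (by
      intro d
      show Mult ψ Xψ d ≡ max (Mult ψ Xψ d) (Mult φ Xφ d) [MOD n - 1]
      rcases max_choice (Mult ψ Xψ d) (Mult φ Xφ d) with h | h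
      · rw [h]
      · rw [h]
        rcases Nat.eq_zero_or_pos d with rfl | hd
        · rw [mult_zero, mult_zero]
        · exact hmult d hd)
    (by
      intro d hd
      have h1 : Mult ψ Xψ d = 0 := mult_of_not_cycType hd
      have h2 : Mult φ Xφ d = 0 := mult_of_not_cycType (hct ▸ hd)
      show max (Mult ψ Xψ d) (Mult φ Xφ d) = Mult ψ Xψ d
      simp [h1, h2])
    (le_refl _)
  -- pump the φ side
  obtain ⟨Sφ, hSφb, hSφf, hSφinv, hSφct, hSφm⟩ := pump_aux hn hφ M B _ Xφ hXφb hXφf hφinv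
    (fun d hd => le_trans (cycType_le_ncard hXφf hφinv hd) (le_max_right _ _))
    (fun d => le_max_right _ _)
    (by
      intro d
      show Mult φ Xφ d ≡ max (Mult ψ Xψ d) (Mult φ Xφ d) [MOD n - 1]
      rcases max_choice (Mult ψ Xψ d) (Mult φ Xφ d) with h | h
      · rw [h]
        rcases Nat.eq_zero_or_pos d with rfl | hd
        · rw [mult_zero, mult_zero]
        · exact (hmult d hd).symm
      · rw [h])
    (by
      intro d hd
      have h1 : Mult ψ Xψ d = 0 := mult_of_not_cycType (hct.symm ▸ hd)
      have h2 : Mult φ Xφ d = 0 := mult_of_not_cycType hd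
      show max (Mult ψ Xψ d) (Mult φ Xφ d) = Mult φ Xφ d
      simp [h1, h2])
    (le_refl _)
  -- equal counts
  have hcnt : ∀ d, ({x ∈ Sψ | OrbitSize ψ x d}).ncard = ({x ∈ Sφ | OrbitSize φ x d}).ncard := by
    intro d
    rcases Nat.eq_zero_or_pos d with rfl | hd
    · have h1 : {x ∈ Sψ | OrbitSize ψ x 0} = ∅ := by
        ext x; simp only [Set.mem_setOf_eq, Set.mem_empty_iff_false, iff_false, not_and]
        intro _ hsz; exact absurd hsz.1 (by omega)
      have h2 : {x ∈ Sφ | OrbitSize φ x 0} = ∅ := by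
        ext x; simp only [Set.mem_setOf_eq, Set.mem_empty_iff_false, iff_false, not_and]
        intro _ hsz; exact absurd hsz.1 (by omega)
      rw [h1, h2]
    · rw [card_eq_mul_mult hSψf hSψinv hd, card_eq_mul_mult hSφf hSφinv hd,
        hSψm d, hSφm d]
  -- matching bijection
  obtain ⟨θ, θ', hm1, hm2, hm3, hm4, hm5⟩ := match_orbits Sψ.ncard Sψ Sφ hSψf hSφf
    (le_refl _) hSψinv hSφinv
    (fun x _ => orbitSize_exists ψ hperψ x)
    (fun x _ => orbitSize_exists φ hperφ x)
    hcnt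
  -- extend to homomorphisms
  obtain ⟨h, ⟨hhom, hext⟩, -⟩ := hSψb V (fun x => θ x.val)
  obtain ⟨h', ⟨h'hom, h'ext⟩, -⟩ := hSφb V (fun x => θ' x.val)
  obtain ⟨G, -, Guniq⟩ := hSψb V (fun x => x.val)
  obtain ⟨G', -, G'uniq⟩ := hSφb V (fun x => x.val)
  have hleft : ∀ v, h' (h v) = v := by
    have e1 : (h' ∘ h) = G := by
      apply Guniq
      refine ⟨hhom.comp h'hom, ?_⟩
      rintro ⟨x, hx⟩
      show h' (h x) = x
      rw [hext ⟨x, hx⟩]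
      show h' (θ x) = x
      have hθx : θ x ∈ Sφ := hm1 x hx
      have := h'ext ⟨θ x, hθx⟩
      rw [this]
      exact hm3 x hx
    have e2 : (id : V → V) = G := Guniq id ⟨isHom_id, fun x => rfl⟩
    intro v
    calc h' (h v) = (h' ∘ h) v := rfl
      _ = G v := by rw [e1]
      _ = id v := by rw [e2]
      _ = v := rfl
  have hright : ∀ v, h (h' v) = v := by
    have e1 : (h ∘ h') = G' := by
      apply G'uniq
      refine ⟨h'hom.comp hhom, ?_⟩
      rintro ⟨x, hx⟩
      show h (h' x) = x
      rw [h'ext ⟨x, hx⟩]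
      show h (θ' x) = x
      have hθx : θ' x ∈ Sψ := hm2 x hx
      have := hext ⟨θ' x, hθx⟩
      rw [this]
      exact hm4 x hx
    have e2 : (id : V → V) = G' := G'uniq id ⟨isHom_id, fun x => rfl⟩
    intro v
    calc h (h' v) = (h ∘ h') v := rfl
      _ = G' v := by rw [e1]
      _ = id v := by rw [e2]
      _ = v := rfl
  set ρ : Equiv.Perm V := ⟨h, h', hleft, hright⟩ with hρdef
  refine ⟨ρ, hhom, ?_⟩
  -- conjugation identity via uniqueness
  obtain ⟨H, -, Huniq⟩ := hSψb V (fun x => φ (θ x.val))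
  have e1 : (h ∘ ⇑ψ) = H := by
    apply Huniq
    refine ⟨hψ.comp hhom, ?_⟩
    rintro ⟨x, hx⟩
    show h (ψ x) = φ (θ x)
    have hpx : ψ x ∈ Sψ := (hSψinv x).mp hx
    have := hext ⟨ψ x, hpx⟩
    rw [this]
    show θ (ψ x) = φ (θ x)
    exact hm5 x hx
  have e2 : (⇑φ ∘ h) = H := by
    apply Huniq
    refine ⟨hhom.comp hφ, ?_⟩
    rintro ⟨x, hx⟩
    show φ (h x) = φ (θ x)
    rw [hext ⟨x, hx⟩]
  intro v
  show h (ψ v) = φ (h v)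
  calc h (ψ v) = (h ∘ ⇑ψ) v := rfl
    _ = H v := by rw [e1]
    _ = (⇑φ ∘ h) v := by rw [e2]
    _ = φ (h v) := rfl

end Backward

/-- Two periodic automorphisms `ψ, φ` of `V_{n,r}`, in semi-normal form with respect to
`A`-bases `Xψ` and `Xφ` respectively, are conjugate in `G_{n,r}` if and only if they have
the same cycle type and `m_ψ(d, Xψ) ≡ m_φ(d, Xφ) (mod n-1)` for every positive integer `d`. -/
theorem stmt15 (n r : ℕ) (hn : 2 ≤ n) {V : Type} [HigmanAlgebra n V]
    (X₀ : Set V) (hX₀ : IsBasis n X₀) (hX₀fin : X₀.Finite) (hX₀card : X₀.ncard = r)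
    (hr : 1 ≤ r)
    (ψ φ : Equiv.Perm V) (hψ : IsHom n ⇑ψ) (hφ : IsHom n ⇑φ)
    (hperψ : Periodic ψ) (hperφ : Periodic φ)
    (Xψ Xφ : Set V) (hXψ : Expansion n X₀ Xψ) (hXφ : Expansion n X₀ Xφ)
    (hsnfψ : SemiNormal n ψ Xψ) (hsnfφ : SemiNormal n φ Xφ) :
    (∃ ρ : Equiv.Perm V, IsHom n ⇑ρ ∧ ∀ v : V, ρ (ψ v) = φ (ρ v)) ↔
      (CycType ψ Xψ = CycType φ Xφ ∧
        ∀ d : ℕ, 0 < d → Mult ψ Xψ d ≡ Mult φ Xφ d [MOD n - 1]) := by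
  obtain ⟨hXψb, hXψf⟩ := expansion_isBasis hXψ hX₀ hX₀fin
  obtain ⟨hXφb, hXφf⟩ := expansion_isBasis hXφ hX₀ hX₀fin
  have hψinv : ∀ x, x ∈ Xψ ↔ ψ x ∈ Xψ :=
    maps_to_iff_of_finite hXψf (snf_maps_basis hn hXψb hψ hperψ hsnfψ)
  have hφinv : ∀ x, x ∈ Xφ ↔ φ x ∈ Xφ :=
    maps_to_iff_of_finite hXφf (snf_maps_basis hn hXφb hφ hperφ hsnfφ)
  constructor
  · rintro ⟨ρ, hρ, hconj⟩
    exact forward_dir hn hXψb hXψf hXφb hXφf hψ hφ hperψ hperφ hψinv hφinv ρ hρ hconj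
  · rintro ⟨hct, hmult⟩
    exact backward_dir hn hXψb hXψf hXφb hXφf hψ hφ hperψ hperφ hψinv hφinv hct hmult
end
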